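/- arXiv:2510.00965 — 9 statements merged into one kernel-verified Lean document; each statement's English description precedes it below -/
import Mathlib

section
/- For every integer d ≥ 2, every index j ∈ {1, …, d−1}, and every fixed choice of the other coordinates in [0,1], the function θ_j ↦ F(θ_1, …, θ_{d−1}) is concave on [0,1]. -/
/-- `markovE d θ n j` is the expected number of downward moves in `n` steps of the Markov
chain on states `d-1, …, 0`, started at state `d-j`, which from state `d-j` stays put with
probability `θ j` and moves down one state with probability `1 - θ j` (state `0`,
i.e. index `j = d`, being absorbing). -/
noncomputable def markovE (d : ℕ) (θ : ℕ → ℝ) : ℕ → ℕ → ℝ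
  | 0, _ => 0
  | n + 1, j =>
      if j < d then θ j * markovE d θ n j + (1 - θ j) * (1 + markovE d θ n (j + 1)) else 0

/-- `F(θ₁, …, θ_{d-1})`: the expected number of downward moves in `d` steps starting from
state `d-1`. -/
noncomputable def markovF (d : ℕ) (θ : ℕ → ℝ) : ℝ := markovE d θ d 1

lemma markovE_succ (d : ℕ) (θ : ℕ → ℝ) (n j : ℕ) :
    markovE d θ (n+1) j =
      if j < d then θ j * markovE d θ n j + (1 - θ j) * (1 + markovE d θ n (j + 1)) else 0 :=
  rfl

/-- `markovE` at indices above `j` does not depend on `θ j`. -/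
lemma markovE_update_high (d : ℕ) (θ : ℕ → ℝ) (j : ℕ) (t : ℝ) :
    ∀ n i, j < i → markovE d (Function.update θ j t) n i = markovE d θ n i := by
  intro n
  induction n with
  | zero => intro i _; rfl
  | succ n ih =>
    intro i hi
    rw [markovE_succ, markovE_succ, Function.update_of_ne (by omega) t θ,
      ih i hi, ih (i+1) (by omega)]

lemma markovE_nonneg (d : ℕ) (θ : ℕ → ℝ) (hθ : ∀ i, θ i ∈ Set.Icc (0 : ℝ) 1) :
    ∀ n i, 0 ≤ markovE d θ n i := by
  intro n
  induction n with
  | zero => intro i; exact le_refl 0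
  | succ n ih =>
    intro i
    rw [markovE_succ]
    split
    · have h1 := (hθ i).1
      have h2 := (hθ i).2
      have := ih i
      have := ih (i+1)
      nlinarith
    · exact le_refl 0

lemma markovE_mono (d : ℕ) (θ : ℕ → ℝ) (hθ : ∀ i, θ i ∈ Set.Icc (0 : ℝ) 1) :
    ∀ n i, markovE d θ n i ≤ markovE d θ (n+1) i := by
  intro n
  induction n with
  | zero =>
    intro i
    rw [markovE_succ]
    split
    · have h1 := (hθ i).1
      have h2 := (hθ i).2
      have hz : ∀ k, markovE d θ 0 k = 0 := fun _ => rfl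
      show markovE d θ 0 i ≤ _
      rw [hz, hz]
      nlinarith
    · exact le_refl 0
  | succ n ih =>
    intro i
    rw [markovE_succ, markovE_succ]
    split
    · have h1 := (hθ i).1
      have h2 := (hθ i).2
      have := ih i
      have := ih (i+1)
      nlinarith
    · exact le_refl 0

lemma markovE_le (d : ℕ) (θ : ℕ → ℝ) (hθ : ∀ i, θ i ∈ Set.Icc (0 : ℝ) 1) :
    ∀ n i, markovE d θ n i ≤ 1 + markovE d θ n (i+1) := by
  intro n
  induction n with
  | zero =>
    intro i
    show (0:ℝ) ≤ 1 + 0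
    norm_num
  | succ n ih =>
    intro i
    rw [markovE_succ]
    split
    · have h1 := (hθ i).1
      have h2 := (hθ i).2
      have h3 := ih i
      have h4 := markovE_mono d θ hθ n (i+1)
      nlinarith
    · have := markovE_nonneg d θ hθ (n+1) (i+1)
      linarith

/-- Key analytic lemma: if `f` is concave, antitone and bounded above by `c` on `[0,1]`,
then `t ↦ t * f t + (1-t) * c` is again concave and antitone on `[0,1]`. -/
lemma markov_key (f : ℝ → ℝ) (c : ℝ)
    (hconc : ConcaveOn ℝ (Set.Icc (0:ℝ) 1) f)
    (hanti : AntitoneOn f (Set.Icc (0:ℝ) 1))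
    (hle : ∀ t ∈ Set.Icc (0:ℝ) 1, f t ≤ c) :
    ConcaveOn ℝ (Set.Icc (0:ℝ) 1) (fun t => t * f t + (1 - t) * c) ∧
    AntitoneOn (fun t => t * f t + (1 - t) * c) (Set.Icc (0:ℝ) 1) := by
  constructor
  · refine ⟨convex_Icc 0 1, fun x hx y hy a b ha hb hab => ?_⟩
    have hfm := hconc.2 hx hy ha hb hab
    have hm : a • x + b • y ∈ Set.Icc (0:ℝ) 1 := (convex_Icc 0 1) hx hy ha hb hab
    simp only [smul_eq_mul] at *
    have hm0 : 0 ≤ a*x+b*y := hm.1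
    have hb1 : b = 1 - a := by linarith
    subst hb1
    rcases le_total x y with hxy | hxy
    · have h1 : f y ≤ f x := hanti hx hy hxy
      nlinarith [mul_le_mul_of_nonneg_left hfm hm0,
        mul_nonneg (mul_nonneg ha hb)
          (mul_nonneg (sub_nonneg.2 hxy) (sub_nonneg.2 h1))]
    · have h1 : f x ≤ f y := hanti hy hx hxy
      nlinarith [mul_le_mul_of_nonneg_left hfm hm0,
        mul_nonneg (mul_nonneg ha hb)
          (mul_nonneg (sub_nonneg.2 hxy) (sub_nonneg.2 h1))]
  · intro x hx y hy hxy
    have h1 : f y ≤ f x := hanti hx hy hxy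
    have h2 : f y ≤ c := hle y hy
    simp only
    nlinarith [mul_nonneg hx.1 (sub_nonneg.2 h1),
      mul_nonneg (sub_nonneg.2 hxy) (sub_nonneg.2 h2)]

lemma markov_update_mem (θ : ℕ → ℝ) (hθ : ∀ i, θ i ∈ Set.Icc (0 : ℝ) 1)
    (j : ℕ) (t : ℝ) (ht : t ∈ Set.Icc (0:ℝ) 1) :
    ∀ i, Function.update θ j t i ∈ Set.Icc (0 : ℝ) 1 := by
  intro i
  rcases eq_or_ne i j with rfl | h
  · simpa using ht
  · rw [Function.update_of_ne h]
    exact hθ i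

/-- Concavity and antitonicity in `θ j` at the coordinate `j` itself. -/
lemma markov_keyP (d : ℕ) (θ : ℕ → ℝ) (hθ : ∀ i, θ i ∈ Set.Icc (0 : ℝ) 1)
    (j : ℕ) (hjd : j < d) :
    ∀ n, ConcaveOn ℝ (Set.Icc (0:ℝ) 1) (fun t => markovE d (Function.update θ j t) n j) ∧
      AntitoneOn (fun t => markovE d (Function.update θ j t) n j) (Set.Icc (0:ℝ) 1) := by
  intro n
  induction n with
  | zero =>
    constructor
    · exact concaveOn_const 0 (convex_Icc 0 1)
    · intro x _ y _ _; exact le_refl _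
  | succ n ih =>
    have hfun : (fun t => markovE d (Function.update θ j t) (n+1) j)
        = fun t => t * markovE d (Function.update θ j t) n j
            + (1 - t) * (1 + markovE d θ n (j+1)) := by
      funext t
      rw [markovE_succ, if_pos hjd, Function.update_self,
        markovE_update_high d θ j t n (j+1) (by omega)]
    rw [hfun]
    refine markov_key _ _ ih.1 ih.2 ?_
    intro t ht
    have hθ' := markov_update_mem θ hθ j t ht
    have h := markovE_le d (Function.update θ j t) hθ' n j
    rwa [markovE_update_high d θ j t n (j+1) (by omega)] at h

lemma markov_concave_all (d : ℕ) (θ : ℕ → ℝ) (hθ : ∀ i, θ i ∈ Set.Icc (0 : ℝ) 1)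
    (j : ℕ) (hjd : j < d) :
    ∀ n i, i ≤ j →
      ConcaveOn ℝ (Set.Icc (0:ℝ) 1) (fun t => markovE d (Function.update θ j t) n i) := by
  intro n
  induction n with
  | zero => intro i _; exact concaveOn_const 0 (convex_Icc 0 1)
  | succ n ih =>
    intro i hij
    rcases eq_or_lt_of_le hij with rfl | hij'
    · exact (markov_keyP d θ hθ i hjd (n+1)).1
    · have hid : i < d := lt_trans hij' hjd
      have hfun : (fun t => markovE d (Function.update θ j t) (n+1) i)
          = fun t => θ i * markovE d (Function.update θ j t) n i
              + (1 - θ i) * (1 + markovE d (Function.update θ j t) n (i+1)) := by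
        funext t
        rw [markovE_succ, if_pos hid, Function.update_of_ne (by omega) t θ]
      rw [hfun]
      have h1 : ConcaveOn ℝ (Set.Icc (0:ℝ) 1)
          (fun t => θ i * markovE d (Function.update θ j t) n i) := by
        have := (ih i (le_of_lt hij')).smul (hθ i).1
        simpa [smul_eq_mul] using this
      have h2 : ConcaveOn ℝ (Set.Icc (0:ℝ) 1)
          (fun t => (1 - θ i) * (1 + markovE d (Function.update θ j t) n (i+1))) := by
        have hc : ConcaveOn ℝ (Set.Icc (0:ℝ) 1)
            (fun t => (1:ℝ) + markovE d (Function.update θ j t) n (i+1)) :=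
          (concaveOn_const 1 (convex_Icc 0 1)).add (ih (i+1) hij')
        have := hc.smul (by linarith [(hθ i).2] : (0:ℝ) ≤ 1 - θ i)
        simpa [smul_eq_mul] using this
      exact h1.add h2

/-- For every `d ≥ 2`, every `j ∈ {1, …, d-1}` and every fixed choice of the other
coordinates in `[0,1]`, the map `θ_j ↦ F(θ₁, …, θ_{d-1})` is concave on `[0,1]`. -/
theorem markovF_concave_in_each_coordinate (d : ℕ) (hd : 2 ≤ d)
    (j : ℕ) (hj1 : 1 ≤ j) (hj2 : j ≤ d - 1)
    (θ : ℕ → ℝ) (hθ : ∀ i, θ i ∈ Set.Icc (0 : ℝ) 1) :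
    ConcaveOn ℝ (Set.Icc (0 : ℝ) 1) (fun t => markovF d (Function.update θ j t)) := by
  have hjd : j < d := by omega
  exact markov_concave_all d θ hθ j hjd d 1 hj1
end

section
/- For every integer d ≥ 2, F(1/d, 2/d, …, (d−1)/d) = (d−1)·(1 − (1 − 1/d)^d). Equivalently, in the Markov chain with θ_j = j/d that starts at state d−1, the expected state after d steps equals (d−1)·(1 − 1/d)^d. -/
lemma markovE_linear_closed (d : ℕ) (hd : 1 ≤ d) (n : ℕ) :
    ∀ j ≤ d, markovE d (fun j => (j : ℝ) / d) n j
      = ((d : ℝ) - j) * (1 - (1 - 1 / d) ^ n) := by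
  have hd0 : (d : ℝ) ≠ 0 := Nat.cast_ne_zero.mpr (by omega)
  induction n with
  | zero => intro j hj; simp [markovE]
  | succ n ih =>
    intro j hj
    rw [markovE]
    rcases lt_or_eq_of_le hj with h | h
    · rw [if_pos h, ih j hj, ih (j + 1) h]
      push_cast
      rw [pow_succ]
      field_simp
      ring
    · rw [h, if_neg (lt_irrefl d)]
      simp [h]

/-- For every `d ≥ 2`, `F(1/d, 2/d, …, (d-1)/d) = (d-1)·(1 - (1-1/d)^d)`; equivalently,
in the Markov chain with `θ_j = j/d` started at state `d-1`, the expected state after `d`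
steps equals `(d-1)·(1-1/d)^d`. -/
theorem markovF_at_linear_theta (d : ℕ) (hd : 2 ≤ d) :
    markovF d (fun j => (j : ℝ) / d) = ((d : ℝ) - 1) * (1 - (1 - 1 / d) ^ d) := by
  have := markovE_linear_closed d (by omega) d 1 (by omega)
  simpa [markovF] using this
end

section
/- Let d ≥ 2 and let f be a candidate function in C_d. Run the OCS-based algorithm with weight sequence f on any bipartite graph in which every request has degree at most d. Then for every subset A ⊆ S of servers and every round r (i.e., after the first r requests have been processed), the probability that all servers in A are simultaneously unmatched at the end of round r is at most 1 / ∏_{s∈A} f(l_s^r), where l_s^r denotes the number of neighbors of server s among the first r requests. -/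
/-- `f : ℕ → ℝ` is a candidate function for degree bound `d` (`f ∈ C_d`): it is
non-decreasing, `f 0 = 1`, and for all `0 ≤ m ≤ d-1` and all non-decreasing integer
sequences `l₁ ≤ … ≤ l_m`,
`1 + (∑ i, f (l i)) / (d - m) ≥ ∏ i, f (l i + 1) / f (l i)`. -/
def CandidateFn (d : ℕ) (f : ℕ → ℝ) : Prop :=
  Monotone f ∧ f 0 = 1 ∧
    ∀ m : ℕ, m < d → ∀ l : Fin m → ℕ, Monotone l →
      1 + (∑ i, f (l i)) / ((d : ℝ) - m) ≥ ∏ i, f (l i + 1) / f (l i)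

/-- Transition probabilities for one round of the OCS-based algorithm: a request with
neighborhood `N` arrives while the matched set is `M` and the current server degrees are
`deg`; the matched set becomes `M'` by matching the request to an unmatched neighbor
`s ∈ N \ M` with probability proportional to `f (deg s)` (if `N \ M = ∅`, nothing
happens). -/
noncomputable def ocsTransProb {ns : ℕ} (f : ℕ → ℝ) (deg : Fin ns → ℕ)
    (N M M' : Finset (Fin ns)) : ℝ :=
  if N \ M = ∅ then (if M' = M then 1 else 0)
  else ∑ s ∈ N \ M,
    if M' = insert s M then f (deg s) / ∑ s' ∈ N \ M, f (deg s') else 0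

/-- Running the OCS-based algorithm on the remaining request sequence, starting from
current degrees `deg` and current distribution `μ` over matched sets: returns the final
distribution over matched sets. -/
noncomputable def ocsRun {ns : ℕ} (f : ℕ → ℝ) :
    List (Finset (Fin ns)) → (Fin ns → ℕ) → (Finset (Fin ns) → ℝ) →
      Finset (Fin ns) → ℝ
  | [], _, μ => μ
  | N :: rest, deg, μ =>
      ocsRun f rest (fun s => if s ∈ N then deg s + 1 else deg s)
        (fun M' => ∑ M : Finset (Fin ns), μ M * ocsTransProb f deg N M M')

/-- The distribution over sets of matched servers produced by the OCS-based algorithm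
with weight sequence `f` on the request sequence `Ns` (all servers initially unmatched,
all degrees initially `0`). -/
noncomputable def ocsDist {ns : ℕ} (f : ℕ → ℝ) (Ns : List (Finset (Fin ns))) :
    Finset (Fin ns) → ℝ :=
  ocsRun f Ns (fun _ => 0) (fun M => if M = ∅ then 1 else 0)

lemma candidate_finset {d : ℕ} {f : ℕ → ℝ} (hf : CandidateFn d f) {ns : ℕ}
    (B : Finset (Fin ns)) (deg : Fin ns → ℕ) (hm : B.card < d) :
    ∏ s ∈ B, (f (deg s + 1) / f (deg s)) ≤
      1 + (∑ s ∈ B, f (deg s)) / ((d : ℝ) - B.card) := by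
  set L : List ℕ := (B.val.map deg).sort (· ≤ ·) with hL
  have hlen : L.length = B.card := by
    rw [hL, Multiset.length_sort, Multiset.card_map]; rfl
  have hsorted : L.Pairwise (· ≤ ·) := Multiset.pairwise_sort _ _
  have hmono : Monotone L.get := hsorted.sortedLE.monotone_get
  have key := hf.2.2 L.length (by omega) L.get hmono
  have hsum0 : ∀ g : ℕ → ℝ, ∑ i, g (L.get i) = ∑ s ∈ B, g (deg s) := by
    intro g
    have h1 : ∑ i, g (L.get i) = (L.map g).sum := by
      conv_rhs => rw [← List.ofFn_get L, List.map_ofFn]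
      rw [← Fin.sum_ofFn]
      rfl
    have h2 : ((B.val.map deg).map g).sum = (L.map g).sum := by
      rw [← Multiset.sort_eq (B.val.map deg) (· ≤ ·)]; rfl
    rw [h1, ← h2, Multiset.map_map]
    rfl
  have hprod0 : ∀ g : ℕ → ℝ, ∏ i, g (L.get i) = ∏ s ∈ B, g (deg s) := by
    intro g
    have h1 : ∏ i, g (L.get i) = (L.map g).prod := by
      conv_rhs => rw [← List.ofFn_get L, List.map_ofFn]
      rw [← Fin.prod_ofFn]
      rfl
    have h2 : ((B.val.map deg).map g).prod = (L.map g).prod := by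
      rw [← Multiset.sort_eq (B.val.map deg) (· ≤ ·)]; rfl
    rw [h1, ← h2, Multiset.map_map]
    rfl
  rw [hsum0 f, hprod0 (fun n => f (n + 1) / f n), hlen] at key
  linarith [key]

lemma inner_eq {ns : ℕ} (f : ℕ → ℝ) (deg : Fin ns → ℕ) (N A M : Finset (Fin ns)) :
    (∑ M' : Finset (Fin ns), if A ∩ M' = ∅ then ocsTransProb f deg N M M' else 0) =
      if A ∩ M = ∅ then
        (if N \ M = ∅ then 1
         else (∑ s ∈ (N \ A) \ M, f (deg s)) / ∑ s ∈ N \ M, f (deg s))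
      else 0 := by
  have hiff : ∀ s : Fin ns, A ∩ insert s M = ∅ ↔ (A ∩ M = ∅ ∧ s ∉ A) := by
    intro s
    simp only [Finset.eq_empty_iff_forall_notMem, Finset.mem_inter, Finset.mem_insert,
      not_and, not_or]
    constructor
    · intro h
      exact ⟨fun x hx hxM => (h x hx).2 hxM, fun hsA => (h s hsA).1 rfl⟩
    · rintro ⟨h1, h2⟩ x hx
      exact ⟨fun he => h2 (he ▸ hx), h1 x hx⟩
  unfold ocsTransProb
  by_cases hNM : N \ M = ∅
  · simp only [hNM, if_true]
    have : ∀ M' : Finset (Fin ns),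
        (if A ∩ M' = ∅ then (if M' = M then (1:ℝ) else 0) else 0) =
        (if M' = M then (if A ∩ M = ∅ then (1:ℝ) else 0) else 0) := by
      intro M'
      by_cases h : M' = M
      · subst h; simp
      · simp [h]
    rw [Finset.sum_congr rfl fun M' _ => this M']
    rw [Finset.sum_ite_eq' Finset.univ M (fun _ => if A ∩ M = ∅ then (1:ℝ) else 0)]
    simp
  · simp only [hNM, if_false]
    have step1 : ∀ M' : Finset (Fin ns),
        (if A ∩ M' = ∅ then
          (∑ s ∈ N \ M, if M' = insert s M then f (deg s) / ∑ s' ∈ N \ M, f (deg s') else 0)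
          else 0) =
        ∑ s ∈ N \ M, (if A ∩ M' = ∅ then
          (if M' = insert s M then f (deg s) / ∑ s' ∈ N \ M, f (deg s') else 0) else 0) := by
      intro M'
      by_cases h : A ∩ M' = ∅ <;> simp [h]
    rw [Finset.sum_congr rfl fun M' _ => step1 M', Finset.sum_comm]
    have step2 : ∀ s ∈ N \ M,
        (∑ M' : Finset (Fin ns), if A ∩ M' = ∅ then
          (if M' = insert s M then f (deg s) / ∑ s' ∈ N \ M, f (deg s') else 0) else 0) =
        (if A ∩ M = ∅ ∧ s ∉ A then f (deg s) / ∑ s' ∈ N \ M, f (deg s') else 0) := by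
      intro s _
      have : ∀ M' : Finset (Fin ns),
          (if A ∩ M' = ∅ then
            (if M' = insert s M then f (deg s) / ∑ s' ∈ N \ M, f (deg s') else 0) else 0) =
          (if M' = insert s M then
            (if A ∩ M = ∅ ∧ s ∉ A then f (deg s) / ∑ s' ∈ N \ M, f (deg s') else 0) else 0) := by
        intro M'
        by_cases h : M' = insert s M
        · subst h; simp only [if_pos rfl, hiff, if_true, eq_self_iff_true]
        · simp [h]
      rw [Finset.sum_congr rfl fun M' _ => this M',
        Finset.sum_ite_eq' Finset.univ (insert s M)
          (fun _ => if A ∩ M = ∅ ∧ s ∉ A then f (deg s) / ∑ s' ∈ N \ M, f (deg s') else 0)]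
      simp
    rw [Finset.sum_congr rfl step2]
    by_cases hAM : A ∩ M = ∅
    · simp only [hAM, true_and, if_true]
      have hfil : (N \ M).filter (fun x => x ∉ A) = (N \ A) \ M := by
        ext x; simp only [Finset.mem_filter, Finset.mem_sdiff]; tauto
      rw [← Finset.sum_filter, hfil, Finset.sum_div]
    · simp [hAM]

lemma one_le_f {d : ℕ} {f : ℕ → ℝ} (hf : CandidateFn d f) (n : ℕ) : 1 ≤ f n :=
  hf.2.1 ▸ hf.1 (Nat.zero_le n)

lemma ocs_step {d ns : ℕ} (hd : 2 ≤ d) {f : ℕ → ℝ} (hf : CandidateFn d f)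
    (N : Finset (Fin ns)) (hN : N.card ≤ d) (deg : Fin ns → ℕ)
    (μ : Finset (Fin ns) → ℝ) (hμ : ∀ M, 0 ≤ μ M)
    (hinv : ∀ A : Finset (Fin ns),
      (∑ M : Finset (Fin ns), if A ∩ M = ∅ then μ M else 0) ≤ 1 / ∏ s ∈ A, f (deg s))
    (A : Finset (Fin ns)) :
    (∑ M' : Finset (Fin ns), if A ∩ M' = ∅ then
        (∑ M : Finset (Fin ns), μ M * ocsTransProb f deg N M M') else 0)
      ≤ 1 / ∏ s ∈ A, f (if s ∈ N then deg s + 1 else deg s) := by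
  have hf1 : ∀ n, 1 ≤ f n := one_le_f hf
  have hfpos : ∀ n, (0:ℝ) < f n := fun n => lt_of_lt_of_le one_pos (hf1 n)
  set B : Finset (Fin ns) := A ∩ N with hB
  set C : Finset (Fin ns) := N \ A with hC
  have hBA : B ⊆ A := Finset.inter_subset_left
  have hBN : B ⊆ N := Finset.inter_subset_right
  -- decomposition of the RHS product
  have hRHS : ∏ s ∈ A, f (if s ∈ N then deg s + 1 else deg s) =
      (∏ s ∈ B, f (deg s + 1)) * ∏ s ∈ A \ B, f (deg s) := by
    rw [mul_comm, ← Finset.prod_sdiff hBA]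
    congr 1
    · exact Finset.prod_congr rfl fun s hs => by
        have : s ∉ N := fun hsN => (Finset.mem_sdiff.mp hs).2 (Finset.mem_inter.mpr ⟨(Finset.mem_sdiff.mp hs).1, hsN⟩)
        rw [if_neg this]
    · exact Finset.prod_congr rfl fun s hs => by rw [if_pos (hBN hs)]
  -- rewrite LHS
  have hswap : (∑ M' : Finset (Fin ns), if A ∩ M' = ∅ then
        (∑ M : Finset (Fin ns), μ M * ocsTransProb f deg N M M') else 0) =
      ∑ M : Finset (Fin ns), μ M *
        (if A ∩ M = ∅ then
          (if N \ M = ∅ then 1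
           else (∑ s ∈ C \ M, f (deg s)) / ∑ s ∈ N \ M, f (deg s))
          else 0) := by
    have h1 : ∀ M' : Finset (Fin ns),
        (if A ∩ M' = ∅ then (∑ M : Finset (Fin ns), μ M * ocsTransProb f deg N M M') else 0) =
        ∑ M : Finset (Fin ns), (if A ∩ M' = ∅ then μ M * ocsTransProb f deg N M M' else 0) := by
      intro M'; by_cases h : A ∩ M' = ∅ <;> simp [h]
    rw [Finset.sum_congr rfl fun M' _ => h1 M', Finset.sum_comm]
    refine Finset.sum_congr rfl fun M _ => ?_
    rw [← inner_eq f deg N A M, Finset.mul_sum]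
    refine Finset.sum_congr rfl fun M' _ => ?_
    by_cases h : A ∩ M' = ∅ <;> simp [h]
  rw [hswap, hRHS]
  by_cases hCB : C = ∅ ∧ B.Nonempty
  · -- all terms vanish
    obtain ⟨hCe, sB, hsB⟩ := hCB
    have hzero : ∀ M : Finset (Fin ns), μ M *
        (if A ∩ M = ∅ then
          (if N \ M = ∅ then (1:ℝ)
           else (∑ s ∈ C \ M, f (deg s)) / ∑ s ∈ N \ M, f (deg s))
          else 0) = 0 := by
      intro M
      by_cases hAM : A ∩ M = ∅
      · have hsNM : sB ∈ N \ M := by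
          refine Finset.mem_sdiff.mpr ⟨hBN hsB, fun hsM => ?_⟩
          exact Finset.notMem_empty sB (hAM ▸ Finset.mem_inter.mpr ⟨hBA hsB, hsM⟩)
        have hNM : N \ M ≠ ∅ := fun h => by simp [h] at hsNM
        rw [if_pos hAM, if_neg hNM, hCe]
        simp
      · simp [hAM]
    rw [Finset.sum_congr rfl fun M _ => hzero M, Finset.sum_const_zero]
    have h1 : 0 < ∏ s ∈ B, f (deg s + 1) := Finset.prod_pos fun s _ => hfpos _
    have h2 : 0 < ∏ s ∈ A \ B, f (deg s) := Finset.prod_pos fun s _ => hfpos _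
    exact le_of_lt (div_pos one_pos (mul_pos h1 h2))
  · -- main case
    have hdisj : Disjoint B C := by
      rw [hB, hC]
      exact Finset.disjoint_left.mpr fun x hx hx' =>
        (Finset.mem_sdiff.mp hx').2 (Finset.mem_inter.mp hx).1
    have hunion : B ∪ C = N := by
      rw [hB, hC]
      ext x
      simp only [Finset.mem_union, Finset.mem_inter, Finset.mem_sdiff]
      tauto
    have hcard : B.card + C.card = N.card := by
      rw [← hunion, Finset.card_union_of_disjoint hdisj]
    have hm : B.card < d := by
      by_cases hBe : B = ∅
      · rw [hBe]; simpa using (by omega : 0 < d)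
      · have hCne : C ≠ ∅ := fun h => hCB ⟨h, Finset.nonempty_iff_ne_empty.mpr hBe⟩
        have : 1 ≤ C.card := Finset.one_le_card.mpr (Finset.nonempty_iff_ne_empty.mpr hCne)
        omega
    set m := B.card with hmdef
    set U : ℝ := (d : ℝ) - m with hUdef
    have hU : 1 ≤ U := by
      rw [hUdef]
      have : (m : ℝ) + 1 ≤ d := by exact_mod_cast Nat.succ_le_of_lt hm
      linarith
    set S : ℝ := ∑ s ∈ B, f (deg s) with hSdef
    have hS0 : 0 ≤ S := Finset.sum_nonneg fun s _ => le_of_lt (hfpos _)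
    have hSU : 0 < S + U := by linarith
    set p : ℝ := 1 / ∏ s ∈ A, f (deg s) with hpdef
    have hApos : 0 < ∏ s ∈ A, f (deg s) := Finset.prod_pos fun s _ => hfpos _
    have hppos : 0 < p := by rw [hpdef]; positivity
    -- per-M bound
    have hperM : ∀ M : Finset (Fin ns), μ M *
        (if A ∩ M = ∅ then
          (if N \ M = ∅ then (1:ℝ)
           else (∑ s ∈ C \ M, f (deg s)) / ∑ s ∈ N \ M, f (deg s))
          else 0) ≤ μ M *
        (if A ∩ M = ∅ then (U^2 + S * ∑ s ∈ C \ M, f (deg s)) / (S + U)^2 else 0) := by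
      intro M
      refine mul_le_mul_of_nonneg_left ?_ (hμ M)
      by_cases hAM : A ∩ M = ∅
      · rw [if_pos hAM, if_pos hAM]
        set T : ℝ := ∑ s ∈ C \ M, f (deg s) with hTdef
        have hT0 : 0 ≤ T := Finset.sum_nonneg fun s _ => le_of_lt (hfpos _)
        by_cases hNM : N \ M = ∅
        · -- B = ∅, C \ M = ∅
          have hBe : B = ∅ := by
            rw [Finset.eq_empty_iff_forall_notMem]
            intro x hx
            have hxM : x ∈ M := by
              have := Finset.eq_empty_iff_forall_notMem.mp hNM x
              simp only [Finset.mem_sdiff, not_and, not_not] at this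
              exact this (hBN hx)
            exact Finset.notMem_empty x (hAM ▸ Finset.mem_inter.mpr ⟨hBA hx, hxM⟩)
          have hSe : S = 0 := by rw [hSdef, hBe, Finset.sum_empty]
          have hTe : T = 0 := by
            rw [hTdef]
            have : C \ M = ∅ := by
              rw [Finset.eq_empty_iff_forall_notMem]
              intro x hx
              rcases Finset.mem_sdiff.mp hx with ⟨hxC, hxM⟩
              have hxN : x ∈ N := (Finset.mem_sdiff.mp (hC ▸ hxC)).1
              have := Finset.eq_empty_iff_forall_notMem.mp hNM x
              simp only [Finset.mem_sdiff, not_and, not_not] at this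
              exact hxM (this hxN)
            rw [this, Finset.sum_empty]
          rw [if_pos hNM, hSe, hTe, mul_zero, add_zero, zero_add]
          have hUne : (U:ℝ)^2 ≠ 0 := by positivity
          rw [div_self hUne]
        · rw [if_neg hNM]
          -- N \ M = B ∪ (C \ M)
          have hsplit : (∑ s ∈ N \ M, f (deg s)) = S + T := by
            rw [hSdef, hTdef, ← Finset.sum_union]
            · congr 1
              ext x
              simp only [Finset.mem_sdiff, Finset.mem_union, hB, hC, Finset.mem_inter]
              constructor
              · rintro ⟨hxN, hxM⟩
                by_cases hxA : x ∈ A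
                · exact Or.inl ⟨hxA, hxN⟩
                · exact Or.inr ⟨⟨hxN, hxA⟩, hxM⟩
              · rintro (⟨hxA, hxN⟩ | ⟨⟨hxN, _⟩, hxM⟩)
                · refine ⟨hxN, fun hxM => ?_⟩
                  exact Finset.notMem_empty x (hAM ▸ Finset.mem_inter.mpr ⟨hxA, hxM⟩)
                · exact ⟨hxN, hxM⟩
            · exact Finset.disjoint_left.mpr fun x hx hx' => by
                rcases Finset.mem_sdiff.mp hx' with ⟨hxC, _⟩
                exact (Finset.mem_sdiff.mp (hC ▸ hxC)).2 (hBA (hB ▸ hx))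
          rw [hsplit]
          have hST : 0 < S + T := by
            rcases Finset.nonempty_iff_ne_empty.mpr hNM with ⟨x, hx⟩
            have : 0 < ∑ s ∈ N \ M, f (deg s) :=
              Finset.sum_pos (fun s _ => hfpos _) ⟨x, hx⟩
            rw [hsplit] at this; exact this
          rw [div_le_div_iff₀ hST (by positivity)]
          nlinarith [mul_nonneg hS0 (sq_nonneg (T - U))]
      · simp [hAM]
    refine le_trans (Finset.sum_le_sum fun M _ => hperM M) ?_
    set q : ℝ := ∑ M : Finset (Fin ns), if A ∩ M = ∅ then μ M else 0 with hqdef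
    set E : ℝ := ∑ M : Finset (Fin ns),
      if A ∩ M = ∅ then μ M * (∑ s ∈ C \ M, f (deg s)) else 0 with hEdef
    have hEq : (∑ M : Finset (Fin ns), μ M *
        (if A ∩ M = ∅ then (U^2 + S * ∑ s ∈ C \ M, f (deg s)) / (S + U)^2 else 0)) =
        (U^2 * q + S * E) / (S + U)^2 := by
      rw [hqdef, hEdef, Finset.mul_sum, Finset.mul_sum, ← Finset.sum_add_distrib,
        Finset.sum_div]
      refine Finset.sum_congr rfl fun M _ => ?_
      by_cases h : A ∩ M = ∅ <;> simp [h] <;> ring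
    rw [hEq]
    have hq : q ≤ p := hinv A
    have hq0 : 0 ≤ q := Finset.sum_nonneg fun M _ => by
      by_cases h : A ∩ M = ∅ <;> simp [h, hμ M]
    have hE : E ≤ U * p := by
      have hiff2 : ∀ (s : Fin ns) (M : Finset (Fin ns)),
          insert s A ∩ M = ∅ ↔ (A ∩ M = ∅ ∧ s ∉ M) := by
        intro s M
        simp only [Finset.eq_empty_iff_forall_notMem, Finset.mem_inter, Finset.mem_insert,
          not_and]
        constructor
        · intro h
          refine ⟨fun x hx hxM => h x (Or.inr hx) hxM, fun hsM => h s (Or.inl rfl) hsM⟩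
        · rintro ⟨h1, h2⟩ x hx
          rcases hx with rfl | hx
          · exact fun h => h2 h
          · exact h1 x hx
      have hEexp : E = ∑ s ∈ C, f (deg s) *
          (∑ M : Finset (Fin ns), if insert s A ∩ M = ∅ then μ M else 0) := by
        rw [hEdef]
        have hper : ∀ M : Finset (Fin ns),
            (if A ∩ M = ∅ then μ M * (∑ s ∈ C \ M, f (deg s)) else 0) =
            ∑ s ∈ C, (if A ∩ M = ∅ ∧ s ∉ M then μ M * f (deg s) else 0) := by
          intro M
          by_cases h : A ∩ M = ∅
          · simp only [h, true_and, if_true]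
            rw [Finset.mul_sum, Finset.sdiff_eq_filter, ← Finset.sum_filter]
          · simp [h]
        rw [Finset.sum_congr rfl fun M _ => hper M, Finset.sum_comm]
        refine Finset.sum_congr rfl fun s _ => ?_
        rw [Finset.mul_sum]
        refine Finset.sum_congr rfl fun M _ => ?_
        simp only [hiff2]
        by_cases h : A ∩ M = ∅ ∧ s ∉ M <;> simp [h] <;> ring
      rw [hEexp]
      have hterm : ∀ s ∈ C, f (deg s) *
          (∑ M : Finset (Fin ns), if insert s A ∩ M = ∅ then μ M else 0) ≤ p := by
        intro s hs
        have hsA : s ∉ A := (Finset.mem_sdiff.mp (hC ▸ hs)).2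
        have h1 := hinv (insert s A)
        rw [Finset.prod_insert hsA] at h1
        calc f (deg s) * (∑ M : Finset (Fin ns), if insert s A ∩ M = ∅ then μ M else 0)
            ≤ f (deg s) * (1 / (f (deg s) * ∏ s ∈ A, f (deg s))) :=
              mul_le_mul_of_nonneg_left h1 (le_of_lt (hfpos _))
          _ = p := by
              rw [hpdef]
              rw [mul_one_div, div_mul_eq_div_div, div_self (ne_of_gt (hfpos _))]
      refine le_trans (Finset.sum_le_sum hterm) ?_
      rw [Finset.sum_const, nsmul_eq_mul]
      refine mul_le_mul_of_nonneg_right ?_ (le_of_lt hppos)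
      rw [hUdef, hmdef]
      have : (B.card : ℝ) + C.card ≤ d := by exact_mod_cast hcard ▸ hN
      linarith
    have hnum : (U^2 * q + S * E) / (S + U)^2 ≤ p * (U / (S + U)) := by
      have h1 : U^2 * q + S * E ≤ U^2 * p + S * (U * p) := by
        have := mul_le_mul_of_nonneg_left hq (by positivity : (0:ℝ) ≤ U^2)
        have := mul_le_mul_of_nonneg_left hE hS0
        linarith
      have h2 : (U^2 * p + S * (U * p)) / (S + U)^2 = p * (U / (S + U)) := by
        field_simp
        ring
      calc (U^2 * q + S * E) / (S + U)^2 ≤ (U^2 * p + S * (U * p)) / (S + U)^2 := by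
            gcongr
        _ = p * (U / (S + U)) := h2
    refine le_trans hnum ?_
    -- final comparison using candidate inequality
    have cand := candidate_finset hf B deg hm
    set P1 : ℝ := ∏ s ∈ B, f (deg s + 1) with hP1
    set P0 : ℝ := ∏ s ∈ B, f (deg s) with hP0
    set PR : ℝ := ∏ s ∈ A \ B, f (deg s) with hPR
    have hP1pos : 0 < P1 := Finset.prod_pos fun s _ => hfpos _
    have hP0pos : 0 < P0 := Finset.prod_pos fun s _ => hfpos _
    have hPRpos : 0 < PR := Finset.prod_pos fun s _ => hfpos _
    have hratio : (∏ s ∈ B, (f (deg s + 1) / f (deg s))) = P1 / P0 := by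
      rw [hP1, hP0, Finset.prod_div_distrib]
    have hUpos : (0:ℝ) < U := by linarith
    have cand' : P1 * U ≤ (S + U) * P0 := by
      rw [hratio] at cand
      have cand2 : P1 / P0 ≤ (U + S) / U := by
        have h3 : 1 + S / U = (U + S) / U := by field_simp
        refine le_trans ?_ (le_of_eq h3)
        rw [hSdef, hUdef, hmdef]
        exact cand
      rw [div_le_div_iff₀ hP0pos hUpos] at cand2
      linarith
    have hpPR : p = 1 / (P0 * PR) := by
      rw [hpdef, ← Finset.prod_sdiff hBA, ← hPR, ← hP0]
      rw [mul_comm]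
    rw [hpPR]
    rw [div_mul_div_comm, one_mul]
    rw [div_le_div_iff₀ (mul_pos (mul_pos hP0pos hPRpos) hSU) (mul_pos hP1pos hPRpos)]
    have hkey := mul_le_mul_of_nonneg_right cand' (le_of_lt hPRpos)
    rw [one_mul]
    calc U * (P1 * PR) = P1 * U * PR := by ring
      _ ≤ (S + U) * P0 * PR := hkey
      _ = P0 * PR * (S + U) := by ring

lemma transProb_nonneg {ns : ℕ} {f : ℕ → ℝ} (hfpos : ∀ n, 0 < f n)
    (deg : Fin ns → ℕ) (N M M' : Finset (Fin ns)) : 0 ≤ ocsTransProb f deg N M M' := by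
  unfold ocsTransProb
  by_cases h : N \ M = ∅
  · simp only [h, if_true]; split <;> norm_num
  · rw [if_neg h]
    refine Finset.sum_nonneg fun s hs => ?_
    split
    · have hD : 0 < ∑ s' ∈ N \ M, f (deg s') :=
        Finset.sum_pos (fun s' _ => hfpos _) (Finset.nonempty_iff_ne_empty.mpr h)
      exact le_of_lt (div_pos (hfpos _) hD)
    · exact le_refl 0

lemma ocs_run_bound {d ns : ℕ} (hd : 2 ≤ d) {f : ℕ → ℝ} (hf : CandidateFn d f) :
    ∀ (L : List (Finset (Fin ns))) (deg : Fin ns → ℕ) (μ : Finset (Fin ns) → ℝ),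
      (∀ N ∈ L, N.card ≤ d) → (∀ M, 0 ≤ μ M) →
      (∀ A : Finset (Fin ns),
        (∑ M : Finset (Fin ns), if A ∩ M = ∅ then μ M else 0) ≤ 1 / ∏ s ∈ A, f (deg s)) →
      ∀ A : Finset (Fin ns),
        (∑ M : Finset (Fin ns), if A ∩ M = ∅ then ocsRun f L deg μ M else 0) ≤
          1 / ∏ s ∈ A, f (deg s + L.countP fun N => decide (s ∈ N)) := by
  intro L
  induction L with
  | nil => intro deg μ _ _ hinv A; simpa [ocsRun] using hinv A
  | cons N rest ih =>
    intro deg μ hreq hμ hinv A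
    have hstep := ocs_step hd hf N (hreq N List.mem_cons_self) deg μ hμ hinv
    have h1 := ih (fun s => if s ∈ N then deg s + 1 else deg s)
      (fun M' => ∑ M : Finset (Fin ns), μ M * ocsTransProb f deg N M M')
      (fun N' hN' => hreq N' (List.mem_cons_of_mem N hN'))
      (fun M' => Finset.sum_nonneg fun M _ => mul_nonneg (hμ M)
        (transProb_nonneg (fun n => lt_of_lt_of_le one_pos (one_le_f hf n)) deg N M M'))
      hstep A
    show (∑ M : Finset (Fin ns), if A ∩ M = ∅ then
        ocsRun f rest (fun s => if s ∈ N then deg s + 1 else deg s)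
          (fun M' => ∑ M : Finset (Fin ns), μ M * ocsTransProb f deg N M M') M else 0) ≤ _
    refine le_trans h1 (le_of_eq ?_)
    congr 1
    refine Finset.prod_congr rfl fun s _ => ?_
    congr 1
    rw [List.countP_cons]
    by_cases hsN : s ∈ N <;> simp [hsN] <;> omega

/-- Let `d ≥ 2`, let `f ∈ C_d` be a candidate function, and run the OCS-based algorithm on
a bipartite graph in which every request has degree at most `d`. Then for every set `A` of
servers and every round `r`, the probability that all servers of `A` are unmatched at the
end of round `r` is at most `1 / ∏_{s ∈ A} f (l_s^r)`, where `l_s^r` is the number of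
neighbors of `s` among the first `r` requests. -/
theorem ocs_unmatched_probability_bound (d ns : ℕ) (hd : 2 ≤ d)
    (f : ℕ → ℝ) (hf : CandidateFn d f)
    (Ns : List (Finset (Fin ns))) (hreq : ∀ N ∈ Ns, N.card ≤ d)
    (A : Finset (Fin ns)) (r : ℕ) :
    (∑ M : Finset (Fin ns), if A ∩ M = ∅ then ocsDist f (Ns.take r) M else 0) ≤
      1 / ∏ s ∈ A, f ((Ns.take r).countP fun N => decide (s ∈ N)) := by
  
  have hinit : ∀ A' : Finset (Fin ns),
      (∑ M : Finset (Fin ns), if A' ∩ M = ∅ then (if M = ∅ then (1:ℝ) else 0) else 0) ≤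
        1 / ∏ s ∈ A', f ((fun _ : Fin ns => 0) s) := by
    intro A'
    have hterm : ∀ M : Finset (Fin ns),
        (if A' ∩ M = ∅ then (if M = ∅ then (1:ℝ) else 0) else 0) =
        (if M = ∅ then (1:ℝ) else 0) := by
      intro M
      by_cases h : M = ∅
      · subst h; simp
      · simp [h]
    rw [Finset.sum_congr rfl fun M _ => hterm M,
      Finset.sum_ite_eq' Finset.univ ∅ (fun _ => (1:ℝ))]
    simp [hf.2.1]
  have h := ocs_run_bound hd hf (Ns.take r) (fun _ => 0)
    (fun M => if M = ∅ then 1 else 0)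
    (fun N hN => hreq N (List.mem_of_mem_take hN))
    (fun M => by by_cases h : M = ∅ <;> simp [h])
    hinit A
  simpa [ocsDist] using h
end

section
/- Let d ≥ 2 and let f be a candidate function in C_d. On any (d,d)-bounded bipartite graph, the OCS-based algorithm with weight sequence f leaves every fixed server unmatched at termination with probability at most 1/f(d). Consequently, if each server s carries a non-negative weight w(s), the expected total weight of matched servers is at least (1 − 1/f(d)) times the maximum weight of a matching; i.e., the algorithm is (1 − 1/f(d))-competitive for vertex-weighted online bipartite matching on (d,d)-bounded graphs. -/
/-- `g` is a matching of the bipartite graph whose requests (in arrival order) have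
neighborhoods `Ns`: each request is assigned at most one neighboring server, and no
server is used twice. -/
def IsMatching {ns : ℕ} (Ns : List (Finset (Fin ns)))
    (g : Fin Ns.length → Option (Fin ns)) : Prop :=
  (∀ i s, g i = some s → s ∈ Ns.get i) ∧
    ∀ i j s, g i = some s → g j = some s → i = j

private lemma list_sum_map (L : List ℕ) (g : ℕ → ℝ) :
    ∑ j : Fin L.length, g (L.get j) = (L.map g).sum := by
  induction L with
  | nil => simp
  | cons a L ih => simp [Fin.sum_univ_succ, ih]

private lemma list_prod_map (L : List ℕ) (g : ℕ → ℝ) :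
    ∏ j : Fin L.length, g (L.get j) = (L.map g).prod := by
  induction L with
  | nil => simp
  | cons a L ih => simp [Fin.prod_univ_succ, ih]

private lemma exists_sorted_enum {α : Type*} (B : Finset α) (v : α → ℕ) :
    ∃ l : Fin B.card → ℕ, Monotone l ∧
      (∀ g : ℕ → ℝ, ∑ i, g (l i) = ∑ s ∈ B, g (v s)) ∧
      (∀ g : ℕ → ℝ, ∏ i, g (l i) = ∏ s ∈ B, g (v s)) := by
  classical
  set L : List ℕ := Multiset.sort (B.val.map v) (· ≤ ·) with hL
  have hlen : L.length = B.card := by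
    simp [hL, Multiset.length_sort]
  have hsorted : L.Pairwise (· ≤ ·) := Multiset.pairwise_sort _ _
  refine ⟨fun i => L.get (Fin.cast hlen.symm i), ?_, ?_, ?_⟩
  · intro i j hij
    exact hsorted.sortedLE hij
  · intro g
    have h1 : ∑ i : Fin B.card, g (L.get (Fin.cast hlen.symm i))
        = ∑ j : Fin L.length, g (L.get j) :=
      Equiv.sum_comp (finCongr hlen.symm) (fun j => g (L.get j))
    rw [h1, list_sum_map]
    have : ((L.map g : List ℝ) : Multiset ℝ) = (B.val.map v).map g := by
      rw [← Multiset.map_coe, hL, Multiset.sort_eq]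
    calc (L.map g).sum = (((L.map g : List ℝ) : Multiset ℝ)).sum := rfl
      _ = ((B.val.map v).map g).sum := by rw [this]
      _ = ∑ s ∈ B, g (v s) := by rw [Multiset.map_map]; rfl
  · intro g
    have h1 : ∏ i : Fin B.card, g (L.get (Fin.cast hlen.symm i))
        = ∏ j : Fin L.length, g (L.get j) :=
      Equiv.prod_comp (finCongr hlen.symm) (fun j => g (L.get j))
    rw [h1, list_prod_map]
    have : ((L.map g : List ℝ) : Multiset ℝ) = (B.val.map v).map g := by
      rw [← Multiset.map_coe, hL, Multiset.sort_eq]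
    calc (L.map g).prod = (((L.map g : List ℝ) : Multiset ℝ)).prod := rfl
      _ = ((B.val.map v).map g).prod := by rw [this]
      _ = ∏ s ∈ B, g (v s) := by rw [Multiset.map_map]; rfl


section
variable {ns : ℕ} {f : ℕ → ℝ}

lemma fpos (hf1 : ∀ n, (1:ℝ) ≤ f n) (n : ℕ) : (0:ℝ) < f n :=
  lt_of_lt_of_le one_pos (hf1 n)

lemma denom_pos (hf1 : ∀ n, (1:ℝ) ≤ f n) {deg : Fin ns → ℕ} {N M : Finset (Fin ns)}
    (h : N \ M ≠ ∅) : 0 < ∑ s' ∈ N \ M, f (deg s') :=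
  Finset.sum_pos (fun s _ => fpos hf1 _) (Finset.nonempty_of_ne_empty h)

lemma trans_nonneg (hf1 : ∀ n, (1:ℝ) ≤ f n) (deg : Fin ns → ℕ) (N M M' : Finset (Fin ns)) :
    0 ≤ ocsTransProb f deg N M M' := by
  unfold ocsTransProb
  split_ifs with h h2
  · norm_num
  · norm_num
  · apply Finset.sum_nonneg
    intro s hs
    have h1 := fpos hf1 (deg s)
    have h2 := denom_pos hf1 (f := f) (deg := deg) h
    split_ifs <;> positivity

lemma trans_sum_one (hf1 : ∀ n, (1:ℝ) ≤ f n) (deg : Fin ns → ℕ) (N M : Finset (Fin ns)) :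
    ∑ M' : Finset (Fin ns), ocsTransProb f deg N M M' = 1 := by
  unfold ocsTransProb
  split_ifs with h
  · simp
  · rw [Finset.sum_comm]
    have hd := (denom_pos hf1 (f := f) (deg := deg) h).ne'
    have hcongr : ∀ s ∈ N \ M,
        (∑ M' : Finset (Fin ns), if M' = insert s M then
          f (deg s) / ∑ s' ∈ N \ M, f (deg s') else 0)
        = f (deg s) / ∑ s' ∈ N \ M, f (deg s') := by
      intro s _
      rw [Finset.sum_ite_eq' Finset.univ (insert s M)]
      simp
    rw [Finset.sum_congr rfl hcongr, ← Finset.sum_div, div_self hd]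
end

section
variable {ns : ℕ} {f : ℕ → ℝ}

lemma inter_insert_empty_iff {ns : ℕ} (s : Fin ns) (M T : Finset (Fin ns)) :
    T ∩ insert s M = ∅ ↔ (s ∉ T ∧ T ∩ M = ∅) := by
  simp only [Finset.eq_empty_iff_forall_notMem, Finset.mem_inter, Finset.mem_insert]
  constructor
  · intro h
    exact ⟨fun hs => h s ⟨hs, Or.inl rfl⟩, fun x ⟨h1, h2⟩ => h x ⟨h1, Or.inr h2⟩⟩
  · rintro ⟨h1, h2⟩ x ⟨hx1, hx2 | hx3⟩
    · exact h1 (hx2 ▸ hx1)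
    · exact h2 x ⟨hx1, hx3⟩

lemma q_eq_empty (deg : Fin ns → ℕ) (N M T : Finset (Fin ns)) (h : N \ M = ∅) :
    (∑ M' : Finset (Fin ns), if T ∩ M' = ∅ then ocsTransProb f deg N M M' else 0)
    = if T ∩ M = ∅ then 1 else 0 := by
  unfold ocsTransProb
  simp only [if_pos h]
  have : ∀ M' : Finset (Fin ns),
      (if T ∩ M' = ∅ then (if M' = M then (1:ℝ) else 0) else 0)
      = (if M' = M then (if T ∩ M' = ∅ then (1:ℝ) else 0) else 0) := by
    intro M'; split_ifs <;> rfl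
  rw [Finset.sum_congr rfl (fun M' _ => this M'),
    Finset.sum_ite_eq' Finset.univ M (fun M' => if T ∩ M' = ∅ then (1:ℝ) else 0)]
  simp

lemma q_eq_nonempty (deg : Fin ns → ℕ) (N M T : Finset (Fin ns)) (h : ¬ N \ M = ∅) :
    (∑ M' : Finset (Fin ns), if T ∩ M' = ∅ then ocsTransProb f deg N M M' else 0)
    = if T ∩ M = ∅ then
        (∑ s ∈ (N \ M) \ T, f (deg s)) / (∑ s ∈ N \ M, f (deg s)) else 0 := by
  unfold ocsTransProb
  simp only [if_neg h]
  have step1 : ∀ M' : Finset (Fin ns),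
      (if T ∩ M' = ∅ then
        (∑ s ∈ N \ M, if M' = insert s M then f (deg s) / ∑ s' ∈ N \ M, f (deg s') else 0)
        else 0)
      = ∑ s ∈ N \ M, (if M' = insert s M then
          (if T ∩ M' = ∅ then f (deg s) / ∑ s' ∈ N \ M, f (deg s') else 0) else 0) := by
    intro M'
    by_cases hT : T ∩ M' = ∅
    · rw [if_pos hT]
      exact Finset.sum_congr rfl (fun s _ => by rw [if_pos hT])
    · rw [if_neg hT]
      symm
      apply Finset.sum_eq_zero
      intro s _
      rw [if_neg hT, ite_self]
  rw [Finset.sum_congr rfl (fun M' _ => step1 M'), Finset.sum_comm]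
  have step2 : ∀ s ∈ N \ M,
      (∑ M' : Finset (Fin ns), if M' = insert s M then
          (if T ∩ M' = ∅ then f (deg s) / ∑ s' ∈ N \ M, f (deg s') else 0) else 0)
      = (if s ∉ T ∧ T ∩ M = ∅ then f (deg s) / ∑ s' ∈ N \ M, f (deg s') else 0) := by
    intro s _
    rw [Finset.sum_ite_eq' Finset.univ (insert s M)]
    simp only [Finset.mem_univ, if_true]
    by_cases hc : T ∩ insert s M = ∅
    · rw [if_pos hc, if_pos ((inter_insert_empty_iff s M T).mp hc)]
    · rw [if_neg hc, if_neg (fun hh => hc ((inter_insert_empty_iff s M T).mpr hh))]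
  rw [Finset.sum_congr rfl step2]
  by_cases hTM : T ∩ M = ∅
  · rw [if_pos hTM]
    simp only [hTM, and_true]
    have hrw : (∑ x ∈ N \ M, if x ∉ T then f (deg x) / ∑ s' ∈ N \ M, f (deg s') else 0)
        = ∑ x ∈ (N \ M) \ T, f (deg x) / ∑ s' ∈ N \ M, f (deg s') := by
      rw [Finset.sdiff_eq_filter (N \ M) T, Finset.sum_filter]
    rw [hrw, Finset.sum_div]
  · rw [if_neg hTM]
    apply Finset.sum_eq_zero
    intro s _
    rw [if_neg (fun hh => hTM hh.2)]
end


section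
variable {ns : ℕ} {f : ℕ → ℝ}

lemma candidate_prod (d : ℕ) (hf : CandidateFn d f) (hf1 : ∀ n, (1:ℝ) ≤ f n)
    (B : Finset (Fin ns)) (deg : Fin ns → ℕ) (hm : B.card < d) :
    ∏ s ∈ B, f (deg s + 1)
      ≤ (1 + (∑ s ∈ B, f (deg s)) / ((d : ℝ) - B.card)) * ∏ s ∈ B, f (deg s) := by
  obtain ⟨l, hmono, hsum, hprod⟩ := exists_sorted_enum B deg
  have hc := hf.2.2 B.card hm l hmono
  have hs' : ∑ i, f (l i) = ∑ s ∈ B, f (deg s) := hsum f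
  have hp' : ∏ i, f (l i + 1) / f (l i) = ∏ s ∈ B, f (deg s + 1) / f (deg s) :=
    hprod (fun n => f (n + 1) / f n)
  rw [hs', hp'] at hc
  have hsplit : ∏ s ∈ B, f (deg s + 1)
      = (∏ s ∈ B, f (deg s + 1) / f (deg s)) * ∏ s ∈ B, f (deg s) := by
    rw [← Finset.prod_mul_distrib]
    exact Finset.prod_congr rfl fun s _ => (div_mul_cancel₀ _ (fpos hf1 _).ne').symm
  rw [hsplit]
  exact mul_le_mul_of_nonneg_right hc
    (Finset.prod_nonneg fun s _ => (fpos hf1 _).le)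

lemma sum_ite_swap {ns : ℕ} (P : Finset (Fin ns) → Prop) [DecidablePred P]
    (μ : Finset (Fin ns) → ℝ) (g : Finset (Fin ns) → Finset (Fin ns) → ℝ) :
    (∑ M' : Finset (Fin ns), if P M' then (∑ M : Finset (Fin ns), μ M * g M M') else 0)
    = ∑ M : Finset (Fin ns), μ M * (∑ M' : Finset (Fin ns), if P M' then g M M' else 0) := by
  have h1 : ∀ M' : Finset (Fin ns), (if P M' then (∑ M : Finset (Fin ns), μ M * g M M') else 0)
      = ∑ M : Finset (Fin ns), if P M' then μ M * g M M' else 0 := by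
    intro M'; by_cases hP : P M' <;> simp [hP]
  rw [Finset.sum_congr rfl fun M' _ => h1 M', Finset.sum_comm]
  refine Finset.sum_congr rfl fun M _ => ?_
  rw [Finset.mul_sum]
  refine Finset.sum_congr rfl fun M' _ => ?_
  by_cases hP : P M' <;> simp [hP]

lemma step_inv (d : ℕ) (hf : CandidateFn d f) (hf1 : ∀ n, (1:ℝ) ≤ f n)
    (deg : Fin ns → ℕ) (N : Finset (Fin ns)) (hN : N.card ≤ d)
    (μ : Finset (Fin ns) → ℝ) (hμ0 : ∀ M, 0 ≤ μ M)
    (hinv : ∀ T : Finset (Fin ns),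
      (∑ M : Finset (Fin ns), if T ∩ M = ∅ then μ M else 0) ≤ ∏ s ∈ T, (f (deg s))⁻¹)
    (T : Finset (Fin ns)) :
    (∑ M' : Finset (Fin ns), if T ∩ M' = ∅ then
        (∑ M : Finset (Fin ns), μ M * ocsTransProb f deg N M M') else 0)
      ≤ ∏ s ∈ T, (f (if s ∈ N then deg s + 1 else deg s))⁻¹ := by
  classical
  rw [sum_ite_swap (fun M' => T ∩ M' = ∅) μ (fun M M' => ocsTransProb f deg N M M')]
  have hq : True := trivial
  set B : Finset (Fin ns) := N ∩ T with hB
  set C : Finset (Fin ns) := N \ T with hC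
  have hnum : ∀ M : Finset (Fin ns), (N \ M) \ T = C \ M := by
    intro M; ext x; simp only [Finset.mem_sdiff, hC]; tauto
  by_cases hm0 : B.card = 0
  -- ============ case B = ∅ ============
  · have hBe : B = ∅ := Finset.card_eq_zero.mp hm0
    have hTN : ∀ s ∈ T, s ∉ N := by
      intro s hsT hsN
      have : s ∈ B := Finset.mem_inter.mpr ⟨hsN, hsT⟩
      simp [hBe] at this
    have hRHS : (∏ s ∈ T, (f (if s ∈ N then deg s + 1 else deg s))⁻¹)
        = ∏ s ∈ T, (f (deg s))⁻¹ :=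
      Finset.prod_congr rfl fun s hs => by rw [if_neg (hTN s hs)]
    rw [hRHS]
    refine le_trans (Finset.sum_le_sum (fun M _ => ?_)) (hinv T)
    by_cases hNM : N \ M = ∅
    · rw [q_eq_empty deg N M T hNM]
      by_cases hTM : T ∩ M = ∅ <;> simp [hTM, hμ0 M]
    · rw [q_eq_nonempty deg N M T hNM]
      by_cases hTM : T ∩ M = ∅
      · rw [if_pos hTM, if_pos hTM]
        have h1 : (∑ s ∈ (N \ M) \ T, f (deg s)) / (∑ s ∈ N \ M, f (deg s)) ≤ 1 :=
          div_le_one_of_le₀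
            (Finset.sum_le_sum_of_subset_of_nonneg (Finset.sdiff_subset)
              (fun i _ _ => (fpos hf1 _).le))
            (Finset.sum_nonneg fun i _ => (fpos hf1 _).le)
        calc μ M * ((∑ s ∈ (N \ M) \ T, f (deg s)) / (∑ s ∈ N \ M, f (deg s)))
            ≤ μ M * 1 := mul_le_mul_of_nonneg_left h1 (hμ0 M)
          _ = μ M := mul_one _
      · simp [hTM]
  -- ============ case B ≠ ∅ ============
  · have hm1 : 1 ≤ B.card := Nat.one_le_iff_ne_zero.mpr hm0
    have hBne : B.Nonempty := Finset.card_pos.mp hm1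
    have hmN : B.card ≤ N.card := Finset.card_le_card (Finset.inter_subset_left)
    have hcardNC : C.card + B.card = N.card := by
      rw [hB, hC]; exact Finset.card_sdiff_add_card_inter N T
    by_cases hmd : d ≤ B.card
    -- ---- subcase B.card = d : LHS is zero ----
    · have hCe : C = ∅ := by
        have : C.card = 0 := by omega
        exact Finset.card_eq_zero.mp this
      have hzero : ∀ M : Finset (Fin ns), μ M * (∑ M' : Finset (Fin ns), if T ∩ M' = ∅ then ocsTransProb f deg N M M' else 0) = 0 := by
        intro M
        by_cases hNM : N \ M = ∅
        · rw [q_eq_empty deg N M T hNM]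
          have hTM : ¬ T ∩ M = ∅ := by
            intro hTM
            obtain ⟨b, hb⟩ := hBne
            have hbT : b ∈ T := (Finset.mem_inter.mp hb).2
            have hbM : b ∈ M := (Finset.sdiff_eq_empty_iff_subset.mp hNM)
              (Finset.mem_inter.mp hb).1
            have : b ∈ T ∩ M := Finset.mem_inter.mpr ⟨hbT, hbM⟩
            simp [hTM] at this
          simp [hTM]
        · rw [q_eq_nonempty deg N M T hNM, hnum M, hCe]
          simp
      calc ∑ M : Finset (Fin ns), μ M * (∑ M' : Finset (Fin ns), if T ∩ M' = ∅ then ocsTransProb f deg N M M' else 0) = 0 := by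
            rw [Finset.sum_congr rfl fun M _ => hzero M]; simp
        _ ≤ _ := Finset.prod_nonneg fun s _ => (inv_nonneg.mpr (fpos hf1 _).le)
    -- ---- subcase 1 ≤ B.card < d ----
    · push_neg at hmd
      set m : ℕ := B.card with hmdef
      set k : ℝ := (d : ℝ) - m with hk
      have hk1 : (1:ℝ) ≤ k := by
        rw [hk]
        have : (m:ℝ) + 1 ≤ (d:ℝ) := by exact_mod_cast hmd
        linarith
      have hkpos : 0 < k := lt_of_lt_of_le one_pos hk1
      set c : ℝ := ∑ s ∈ B, f (deg s) with hcdef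
      have hcpos : 0 < c := Finset.sum_pos (fun s _ => fpos hf1 _) hBne
      have hckpos : 0 < c + k := by linarith
      set PT : ℝ := ∏ s ∈ T, (f (deg s))⁻¹ with hPT
      have hPTpos : 0 < PT := Finset.prod_pos fun s _ => inv_pos.mpr (fpos hf1 _)
      have hCk : (C.card : ℝ) ≤ k := by
        rw [hk]
        have h1 : (C.card : ℕ) + m ≤ d := by omega
        have : ((C.card : ℕ) : ℝ) + (m:ℝ) ≤ (d:ℝ) := by exact_mod_cast h1
        linarith
      -- pointwise bound
      have hpoint : ∀ M : Finset (Fin ns),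
          μ M * (∑ M' : Finset (Fin ns), if T ∩ M' = ∅ then ocsTransProb f deg N M M' else 0)
          ≤ μ M * (if T ∩ M = ∅ then
            (k^2/(c+k)^2 + (c/(c+k)^2) * ∑ s ∈ C \ M, f (deg s)) else 0) := by
        intro M
        refine mul_le_mul_of_nonneg_left ?_ (hμ0 M)
        by_cases hNM : N \ M = ∅
        · rw [q_eq_empty deg N M T hNM]
          by_cases hTM : T ∩ M = ∅
          · exfalso
            obtain ⟨b, hb⟩ := hBne
            have hbT : b ∈ T := (Finset.mem_inter.mp hb).2
            have hbM : b ∈ M := (Finset.sdiff_eq_empty_iff_subset.mp hNM)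
              (Finset.mem_inter.mp hb).1
            have : b ∈ T ∩ M := Finset.mem_inter.mpr ⟨hbT, hbM⟩
            simp [hTM] at this
          · simp [hTM]
        · rw [q_eq_nonempty deg N M T hNM, hnum M]
          by_cases hTM : T ∩ M = ∅
          · rw [if_pos hTM, if_pos hTM]
            have hTM' : ∀ x, x ∈ T → x ∉ M := by
              intro x hxT hxM
              have : x ∈ T ∩ M := Finset.mem_inter.mpr ⟨hxT, hxM⟩
              simp [hTM] at this
            have hsplitset : N \ M = B ∪ (C \ M) := by
              ext x
              simp only [Finset.mem_sdiff, Finset.mem_union, Finset.mem_inter, hB, hC]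
              constructor
              · rintro ⟨hxN, hxM⟩
                by_cases hxT : x ∈ T
                · exact Or.inl ⟨hxN, hxT⟩
                · exact Or.inr ⟨⟨hxN, hxT⟩, hxM⟩
              · rintro (⟨hxN, hxT⟩ | ⟨⟨hxN, _⟩, hxM⟩)
                · exact ⟨hxN, hTM' x hxT⟩
                · exact ⟨hxN, hxM⟩
            have hdisj : Disjoint B (C \ M) := by
              rw [Finset.disjoint_left]
              intro x hxB hxCM
              exact (Finset.mem_sdiff.mp (Finset.mem_sdiff.mp hxCM).1).2
                (Finset.mem_inter.mp hxB).2
            rw [hsplitset, Finset.sum_union hdisj, ← hcdef]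
            set X : ℝ := ∑ s ∈ C \ M, f (deg s) with hXdef
            have hX : 0 ≤ X := Finset.sum_nonneg fun s _ => (fpos hf1 _).le
            have key : X * (c+k)^2 ≤ (k^2 + c*X) * (c+X) := by
              nlinarith [mul_nonneg hcpos.le (sq_nonneg (X - k))]
            calc X / (c + X) ≤ (k^2 + c*X)/(c+k)^2 := by
                  rw [div_le_div_iff₀ (by positivity) (by positivity)]
                  linarith [key]
              _ = k^2/(c+k)^2 + c/(c+k)^2 * X := by ring
          · simp [hTM]
      refine le_trans (Finset.sum_le_sum fun M _ => hpoint M) ?_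
      have hsplit2 : ∀ M : Finset (Fin ns), μ M * (if T ∩ M = ∅ then
            (k^2/(c+k)^2 + (c/(c+k)^2) * ∑ s ∈ C \ M, f (deg s)) else 0)
          = k^2/(c+k)^2 * (if T ∩ M = ∅ then μ M else 0)
            + c/(c+k)^2 * (if T ∩ M = ∅ then μ M * ∑ s ∈ C \ M, f (deg s) else 0) := by
        intro M
        by_cases hTM : T ∩ M = ∅ <;> simp [hTM] <;> ring
      rw [Finset.sum_congr rfl fun M _ => hsplit2 M, Finset.sum_add_distrib,
        ← Finset.mul_sum, ← Finset.mul_sum]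
      -- second moment sum
      have hXsum : (∑ M : Finset (Fin ns),
            if T ∩ M = ∅ then μ M * ∑ s ∈ C \ M, f (deg s) else 0)
          ≤ (C.card : ℝ) * PT := by
        have hrw : ∀ M : Finset (Fin ns), (if T ∩ M = ∅ then μ M * ∑ s ∈ C \ M, f (deg s) else 0)
            = ∑ s ∈ C, (if (insert s T) ∩ M = ∅ then μ M * f (deg s) else 0) := by
          intro M
          by_cases hTM : T ∩ M = ∅
          · rw [if_pos hTM, Finset.mul_sum]
            have h2 : ∑ s ∈ C \ M, μ M * f (deg s)
                = ∑ s ∈ C, (if s ∉ M then μ M * f (deg s) else 0) := by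
              rw [Finset.sdiff_eq_filter C M, Finset.sum_filter]
            rw [h2]
            refine Finset.sum_congr rfl fun s _ => ?_
            have hiff : (insert s T) ∩ M = ∅ ↔ (s ∉ M ∧ T ∩ M = ∅) := by
              rw [Finset.inter_comm, inter_insert_empty_iff, Finset.inter_comm]
            by_cases hsM : s ∉ M
            · rw [if_pos hsM, if_pos (hiff.mpr ⟨hsM, hTM⟩)]
            · rw [if_neg hsM, if_neg (fun hh => hsM (hiff.mp hh).1)]
          · rw [if_neg hTM]
            symm
            refine Finset.sum_eq_zero fun s _ => ?_
            rw [if_neg]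
            intro hh
            have hiff : (insert s T) ∩ M = ∅ ↔ (s ∉ M ∧ T ∩ M = ∅) := by
              rw [Finset.inter_comm, inter_insert_empty_iff, Finset.inter_comm]
            exact hTM (hiff.mp hh).2
        rw [Finset.sum_congr rfl fun M _ => hrw M, Finset.sum_comm]
        have hbound : ∀ s ∈ C, (∑ M : Finset (Fin ns),
              if (insert s T) ∩ M = ∅ then μ M * f (deg s) else 0) ≤ PT := by
          intro s hsC
          have hsT : s ∉ T := (Finset.mem_sdiff.mp hsC).2
          have h3 : (∑ M : Finset (Fin ns), if (insert s T) ∩ M = ∅ then μ M * f (deg s) else 0)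
              = (∑ M : Finset (Fin ns), if (insert s T) ∩ M = ∅ then μ M else 0) * f (deg s) := by
            rw [Finset.sum_mul]
            refine Finset.sum_congr rfl fun M _ => ?_
            by_cases hP : (insert s T) ∩ M = ∅ <;> simp [hP]
          rw [h3]
          have h4 := hinv (insert s T)
          rw [Finset.prod_insert hsT] at h4
          calc (∑ M : Finset (Fin ns), if (insert s T) ∩ M = ∅ then μ M else 0) * f (deg s)
              ≤ ((f (deg s))⁻¹ * PT) * f (deg s) :=
                mul_le_mul_of_nonneg_right h4 (fpos hf1 _).le
            _ = PT := by
                rw [mul_comm ((f (deg s))⁻¹) PT, mul_assoc,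
                  inv_mul_cancel₀ (fpos hf1 (deg s)).ne', mul_one]
        calc ∑ s ∈ C, (∑ M : Finset (Fin ns),
              if (insert s T) ∩ M = ∅ then μ M * f (deg s) else 0)
            ≤ ∑ s ∈ C, PT := Finset.sum_le_sum hbound
          _ = (C.card : ℝ) * PT := by rw [Finset.sum_const, nsmul_eq_mul]
      have hfirst : (∑ M : Finset (Fin ns), if T ∩ M = ∅ then μ M else 0) ≤ PT := hinv T
      have hcoef1 : (0:ℝ) ≤ k^2/(c+k)^2 := by positivity
      have hcoef2 : (0:ℝ) ≤ c/(c+k)^2 := by positivity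
      have hstep : k^2/(c+k)^2 * (∑ M : Finset (Fin ns), if T ∩ M = ∅ then μ M else 0)
            + c/(c+k)^2 * (∑ M : Finset (Fin ns),
              if T ∩ M = ∅ then μ M * ∑ s ∈ C \ M, f (deg s) else 0)
          ≤ k/(c+k) * PT := by
        have h5 : c/(c+k)^2 * (∑ M : Finset (Fin ns),
              if T ∩ M = ∅ then μ M * ∑ s ∈ C \ M, f (deg s) else 0)
            ≤ c/(c+k)^2 * (k * PT) := by
          refine mul_le_mul_of_nonneg_left (le_trans hXsum ?_) hcoef2
          exact mul_le_mul_of_nonneg_right hCk hPTpos.le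
        have h6 : k^2/(c+k)^2 * (∑ M : Finset (Fin ns), if T ∩ M = ∅ then μ M else 0)
            ≤ k^2/(c+k)^2 * PT := mul_le_mul_of_nonneg_left hfirst hcoef1
        have h7 : k^2/(c+k)^2 * PT + c/(c+k)^2 * (k * PT) = k/(c+k) * PT := by
          field_simp
          ring
        linarith
      refine le_trans hstep ?_
      -- final: candidate function inequality
      have hBT : B ⊆ T := Finset.inter_subset_right
      have hTB : ∀ s ∈ T \ B, s ∉ N := by
        intro s hs
        obtain ⟨hsT, hsB⟩ := Finset.mem_sdiff.mp hs
        intro hsN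
        exact hsB (Finset.mem_inter.mpr ⟨hsN, hsT⟩)
      have hBN : ∀ s ∈ B, s ∈ N := fun s hs => (Finset.mem_inter.mp hs).1
      have hprodT : ∏ s ∈ T, (f (if s ∈ N then deg s + 1 else deg s))⁻¹
          = (∏ s ∈ T \ B, (f (deg s))⁻¹) * ∏ s ∈ B, (f (deg s + 1))⁻¹ := by
        rw [← Finset.prod_sdiff hBT]
        congr 1
        · exact Finset.prod_congr rfl fun s hs => by rw [if_neg (hTB s hs)]
        · exact Finset.prod_congr rfl fun s hs => by rw [if_pos (hBN s hs)]
      have hprodT0 : PT = (∏ s ∈ T \ B, (f (deg s))⁻¹) * ∏ s ∈ B, (f (deg s))⁻¹ := by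
        rw [hPT, ← Finset.prod_sdiff hBT]
      rw [hprodT, hprodT0]
      set P0 : ℝ := ∏ s ∈ B, f (deg s) with hP0
      set P1 : ℝ := ∏ s ∈ B, f (deg s + 1) with hP1
      have hP0pos : 0 < P0 := Finset.prod_pos fun s _ => fpos hf1 _
      have hP1pos : 0 < P1 := Finset.prod_pos fun s _ => fpos hf1 _
      have hcand := candidate_prod d hf hf1 B deg hmd
      rw [← hcdef, ← hP0, ← hP1] at hcand
      -- hcand : P1 ≤ (1 + c / ((d:ℝ) - B.card)) * P0 and k = (d:ℝ) - B.card
      have hkk : ((d:ℝ) - (B.card : ℝ)) = k := by rw [hk, hmdef]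
      rw [hkk] at hcand
      have hkey : k * P1 ≤ (c + k) * P0 := by
        have h8 : k * P1 ≤ k * ((1 + c/k) * P0) := mul_le_mul_of_nonneg_left hcand hkpos.le
        have h9 : k * ((1 + c/k) * P0) = (c + k) * P0 := by
          have hkc : k * (1 + c/k) = c + k := by
            rw [mul_add, mul_one, mul_div_cancel₀ _ hkpos.ne']
            ring
          rw [← mul_assoc, hkc]
        exact le_of_le_of_eq h8 h9
      have hinvd1 : ∏ s ∈ B, (f (deg s))⁻¹ = P0⁻¹ := by
        rw [hP0, ← Finset.prod_inv_distrib]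
      have hinvd2 : ∏ s ∈ B, (f (deg s + 1))⁻¹ = P1⁻¹ := by
        rw [hP1, ← Finset.prod_inv_distrib]
      rw [hinvd1, hinvd2]
      set Q : ℝ := ∏ s ∈ T \ B, (f (deg s))⁻¹ with hQ
      have hQpos : 0 ≤ Q := Finset.prod_nonneg fun s _ => inv_nonneg.mpr (fpos hf1 _).le
      have hmain : k/(c+k) * P0⁻¹ ≤ P1⁻¹ := by
        rw [inv_eq_one_div P0, div_mul_div_comm, mul_one, inv_eq_one_div P1,
          div_le_div_iff₀ (by positivity) hP1pos]
        linarith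
      calc k/(c+k) * (Q * P0⁻¹) = Q * (k/(c+k) * P0⁻¹) := by ring
        _ ≤ Q * P1⁻¹ := mul_le_mul_of_nonneg_left hmain hQpos

end

section
variable {ns : ℕ} {f : ℕ → ℝ}

lemma ocsRun_inv (d : ℕ) (hf : CandidateFn d f) (hf1 : ∀ n, (1:ℝ) ≤ f n) :
    ∀ (Ns : List (Finset (Fin ns))), (∀ N ∈ Ns, N.card ≤ d) →
    ∀ (deg : Fin ns → ℕ) (μ : Finset (Fin ns) → ℝ),
    (∀ M, 0 ≤ μ M) → (∑ M : Finset (Fin ns), μ M = 1) →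
    (∀ T : Finset (Fin ns),
      (∑ M : Finset (Fin ns), if T ∩ M = ∅ then μ M else 0) ≤ ∏ s ∈ T, (f (deg s))⁻¹) →
    (∀ M, 0 ≤ ocsRun f Ns deg μ M) ∧ (∑ M : Finset (Fin ns), ocsRun f Ns deg μ M = 1) ∧
    (∀ T : Finset (Fin ns),
      (∑ M : Finset (Fin ns), if T ∩ M = ∅ then ocsRun f Ns deg μ M else 0)
      ≤ ∏ s ∈ T, (f (deg s + Ns.countP (fun N => decide (s ∈ N))))⁻¹) := by
  intro Ns
  induction Ns with
  | nil =>
    intro _ deg μ h0 h1 h2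
    refine ⟨h0, h1, fun T => ?_⟩
    simp only [ocsRun, List.countP_nil, Nat.add_zero]
    exact h2 T
  | cons N rest ih =>
    intro hreq deg μ h0 h1 h2
    have hreq' : ∀ N' ∈ rest, N'.card ≤ d := fun N' h => hreq N' (List.mem_cons_of_mem N h)
    have hNd : N.card ≤ d := hreq N (List.mem_cons_self)
    set deg' : Fin ns → ℕ := fun s => if s ∈ N then deg s + 1 else deg s with hdeg'
    set μ' : Finset (Fin ns) → ℝ :=
      fun M' => ∑ M : Finset (Fin ns), μ M * ocsTransProb f deg N M M' with hμ'
    have h0' : ∀ M, 0 ≤ μ' M := fun M' =>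
      Finset.sum_nonneg fun M _ => mul_nonneg (h0 M) (trans_nonneg hf1 deg N M M')
    have h1' : ∑ M' : Finset (Fin ns), μ' M' = 1 := by
      rw [hμ', Finset.sum_comm]
      calc ∑ M : Finset (Fin ns), ∑ M' : Finset (Fin ns), μ M * ocsTransProb f deg N M M'
          = ∑ M : Finset (Fin ns), μ M := by
            refine Finset.sum_congr rfl fun M _ => ?_
            rw [← Finset.mul_sum, trans_sum_one hf1 deg N M, mul_one]
        _ = 1 := h1
    have h2' : ∀ T : Finset (Fin ns),
        (∑ M : Finset (Fin ns), if T ∩ M = ∅ then μ' M else 0) ≤ ∏ s ∈ T, (f (deg' s))⁻¹ :=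
      fun T => step_inv d hf hf1 deg N hNd μ h0 h2 T
    obtain ⟨g0, g1, g2⟩ := ih hreq' deg' μ' h0' h1' h2'
    refine ⟨fun M => g0 M, g1, fun T => ?_⟩
    refine le_trans (g2 T) (le_of_eq (Finset.prod_congr rfl fun s _ => ?_))
    congr 1
    congr 1
    rw [List.countP_cons]
    by_cases hsN : s ∈ N
    · simp [hdeg', hsN]
      omega
    · simp [hdeg', hsN]

end

lemma singleton_inter_empty {ns : ℕ} (s : Fin ns) (M : Finset (Fin ns)) :
    (({s} : Finset (Fin ns)) ∩ M = ∅) ↔ s ∉ M := by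
  simp only [Finset.eq_empty_iff_forall_notMem, Finset.mem_inter, Finset.mem_singleton]
  constructor
  · intro h hs; exact h s ⟨rfl, hs⟩
  · rintro h x ⟨rfl, hx⟩; exact h hx

/-- Let `d ≥ 2` and `f ∈ C_d`. On any `(d,d)`-bounded bipartite graph (every request has
degree at most `d`, every server degree at least `d`), the OCS-based algorithm with weight
sequence `f` leaves every fixed server unmatched at termination with probability at most
`1 / f d`; consequently, for non-negative server weights `w`, the expected total weight of
matched servers is at least `(1 - 1/f d)` times the weight of any (hence of a maximum
weight) matching. -/
theorem ocs_competitive_on_dd_bounded (d ns : ℕ) (hd : 2 ≤ d)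
    (f : ℕ → ℝ) (hf : CandidateFn d f)
    (Ns : List (Finset (Fin ns)))
    (hreq : ∀ N ∈ Ns, N.card ≤ d)
    (hserv : ∀ s : Fin ns, d ≤ Ns.countP fun N => decide (s ∈ N))
    (w : Fin ns → ℝ) (hw : ∀ s, 0 ≤ w s) :
    (∀ s : Fin ns,
        (∑ M : Finset (Fin ns), if s ∉ M then ocsDist f Ns M else 0) ≤ 1 / f d) ∧
      ∀ g : Fin Ns.length → Option (Fin ns), IsMatching Ns g →
        (1 - 1 / f d) * (∑ i : Fin Ns.length, ((g i).map w).getD 0) ≤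
          ∑ M : Finset (Fin ns), ocsDist f Ns M * ∑ s ∈ M, w s := by
  classical
  have hf1 : ∀ n, (1:ℝ) ≤ f n := fun n => hf.2.1 ▸ hf.1 (Nat.zero_le n)
  set μ0 : Finset (Fin ns) → ℝ := fun M => if M = ∅ then 1 else 0 with hμ0def
  have h00 : ∀ M, 0 ≤ μ0 M := fun M => by by_cases h : M = ∅ <;> simp [hμ0def, h]
  have h01 : ∑ M : Finset (Fin ns), μ0 M = 1 := by
    rw [hμ0def]
    rw [Finset.sum_ite_eq' Finset.univ (∅ : Finset (Fin ns)) (fun _ => (1:ℝ))]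
    simp
  have h02 : ∀ T : Finset (Fin ns),
      (∑ M : Finset (Fin ns), if T ∩ M = ∅ then μ0 M else 0)
        ≤ ∏ s ∈ T, (f ((fun _ => 0) s))⁻¹ := by
    intro T
    have hrw : ∀ M : Finset (Fin ns), (if T ∩ M = ∅ then μ0 M else 0)
        = if M = ∅ then (if T ∩ M = ∅ then (1:ℝ) else 0) else 0 := by
      intro M
      by_cases h : M = ∅ <;> by_cases h' : T ∩ M = ∅ <;> simp [hμ0def, h, h']
    rw [Finset.sum_congr rfl fun M _ => hrw M,
      Finset.sum_ite_eq' Finset.univ (∅ : Finset (Fin ns))]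
    simp [hf.2.1]
  obtain ⟨g0, g1, g2⟩ := ocsRun_inv d hf hf1 Ns hreq (fun _ => 0) μ0 h00 h01 h02
  have hdist : ocsDist f Ns = ocsRun f Ns (fun _ => 0) μ0 := rfl
  -- part 1
  have part1 : ∀ s : Fin ns,
      (∑ M : Finset (Fin ns), if s ∉ M then ocsDist f Ns M else 0) ≤ 1 / f d := by
    intro s
    have h3 := g2 {s}
    have hrw : ∀ M : Finset (Fin ns),
        (if ({s} : Finset (Fin ns)) ∩ M = ∅ then ocsRun f Ns (fun _ => 0) μ0 M else 0)
        = if s ∉ M then ocsDist f Ns M else 0 := by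
      intro M
      rw [hdist]
      by_cases h : s ∈ M
      · rw [if_neg (by simpa [singleton_inter_empty s M] using h), if_neg (by simp [h])]
      · rw [if_pos (by simpa [singleton_inter_empty s M] using h), if_pos h]
    rw [← Finset.sum_congr rfl fun M _ => hrw M]
    refine le_trans h3 ?_
    rw [Finset.prod_singleton, one_div]
    have : f d ≤ f (0 + Ns.countP (fun N => decide (s ∈ N))) := by
      apply hf.1
      simpa using hserv s
    exact inv_anti₀ (fpos hf1 d) this
  refine ⟨part1, ?_⟩
  -- part 2
  intro g hg
  have hpart : ∀ s : Fin ns,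
      (1 : ℝ) - 1 / f d ≤ ∑ M : Finset (Fin ns), if s ∈ M then ocsDist f Ns M else 0 := by
    intro s
    have hsum' : (∑ M : Finset (Fin ns), if s ∈ M then ocsDist f Ns M else 0)
        + (∑ M : Finset (Fin ns), if s ∉ M then ocsDist f Ns M else 0) = 1 := by
      rw [← Finset.sum_add_distrib]
      calc (∑ M : Finset (Fin ns), ((if s ∈ M then ocsDist f Ns M else 0)
              + if s ∉ M then ocsDist f Ns M else 0))
          = ∑ M : Finset (Fin ns), ocsDist f Ns M :=
            Finset.sum_congr rfl fun M _ => by by_cases h : s ∈ M <;> simp [h]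
        _ = 1 := g1
    have h2 := part1 s
    linarith
  have hexp : ∑ M : Finset (Fin ns), ocsDist f Ns M * ∑ s ∈ M, w s
      = ∑ s : Fin ns, w s * ∑ M : Finset (Fin ns), (if s ∈ M then ocsDist f Ns M else 0) := by
    calc ∑ M : Finset (Fin ns), ocsDist f Ns M * ∑ s ∈ M, w s
        = ∑ M : Finset (Fin ns), ∑ s : Fin ns, (if s ∈ M then ocsDist f Ns M * w s else 0) := by
          refine Finset.sum_congr rfl fun M _ => ?_
          rw [Finset.mul_sum, ← Finset.sum_filter, Finset.filter_mem_eq_inter,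
            Finset.univ_inter]
      _ = ∑ s : Fin ns, ∑ M : Finset (Fin ns), (if s ∈ M then ocsDist f Ns M * w s else 0) :=
          Finset.sum_comm
      _ = ∑ s : Fin ns, w s * ∑ M : Finset (Fin ns), (if s ∈ M then ocsDist f Ns M else 0) := by
          refine Finset.sum_congr rfl fun s _ => ?_
          rw [Finset.mul_sum]
          refine Finset.sum_congr rfl fun M _ => ?_
          by_cases h : s ∈ M
          · simp only [h, if_true]; ring
          · simp [h]
  have hLHS : (∑ i : Fin Ns.length, ((g i).map w).getD 0)
      = ∑ s : Fin ns, w s * (∑ i : Fin Ns.length, if g i = some s then (1:ℝ) else 0) := by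
    calc ∑ i : Fin Ns.length, ((g i).map w).getD 0
        = ∑ i : Fin Ns.length, ∑ s : Fin ns, (if g i = some s then w s else 0) := by
          refine Finset.sum_congr rfl fun i _ => ?_
          cases hgi : g i with
          | none => simp [hgi]
          | some t => simp [hgi, Finset.sum_ite_eq]
      _ = ∑ s : Fin ns, ∑ i : Fin Ns.length, (if g i = some s then w s else 0) :=
          Finset.sum_comm
      _ = _ := by
          refine Finset.sum_congr rfl fun s _ => ?_
          rw [Finset.mul_sum]
          refine Finset.sum_congr rfl fun i _ => ?_
          by_cases h : g i = some s <;> simp [h]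
  rw [hexp, hLHS, Finset.mul_sum]
  refine Finset.sum_le_sum fun s _ => ?_
  have hcnt0 : (0:ℝ) ≤ ∑ i : Fin Ns.length, if g i = some s then (1:ℝ) else 0 :=
    Finset.sum_nonneg fun i _ => by by_cases h : g i = some s <;> simp [h]
  have hcnt1 : (∑ i : Fin Ns.length, if g i = some s then (1:ℝ) else 0) ≤ 1 := by
    have hcard : (Finset.univ.filter (fun i => g i = some s)).card ≤ 1 := by
      refine Finset.card_le_one.mpr fun a ha b hb => ?_
      exact hg.2 a b s (Finset.mem_filter.mp ha).2 (Finset.mem_filter.mp hb).2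
    rw [Finset.sum_boole]
    exact_mod_cast hcard
  have hps := hpart s
  have hfd : (0:ℝ) ≤ 1 - 1/f d := by
    have h5 : 1/f d ≤ 1 := by
      rw [div_le_one (fpos hf1 d)]
      exact hf1 d
    linarith
  have e1 : (1 - 1/f d) * (w s * ∑ i : Fin Ns.length, if g i = some s then (1:ℝ) else 0)
      ≤ (1 - 1/f d) * (w s * 1) :=
    mul_le_mul_of_nonneg_left (mul_le_mul_of_nonneg_left hcnt1 (hw s)) hfd
  have e3 : w s * (1 - 1/f d)
      ≤ w s * ∑ M : Finset (Fin ns), (if s ∈ M then ocsDist f Ns M else 0) :=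
    mul_le_mul_of_nonneg_left hps (hw s)
  linarith
end

section
/- Fix integers d ≥ 2, m ∈ {1, …, d−1}, and z ≥ 0. Let 1 = a(0) < a(1) < … < a(z) be a strictly increasing real sequence satisfying 1 + m·a(i)/(d−m) ≥ (a(i+1)/a(i))^m for every i ∈ {0, 1, …, z−1}. Then the minimum, over all integers 1 ≤ t ≤ m and all integer sequences 0 ≤ l_1 ≤ … ≤ l_{m−t} ≤ z−1, of ((1 + (t·a(z) + ∑_{i=1}^{m−t} a(l_i))/(d−m)) · ∏_{i=1}^{m−t} a(l_i)/a(l_i+1))^{1/t} equals (1 + m·a(z)/(d−m))^{1/m}; in particular, every such term is at least (1 + m·a(z)/(d−m))^{1/m}, with equality attained at t = m (empty sequence). -/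
/-- Technical lemma: fix `d ≥ 2`, `1 ≤ m ≤ d-1`, `z ≥ 0`, and a strictly increasing real
sequence `1 = a 0 < a 1 < … < a z` with `1 + m·a i/(d-m) ≥ (a (i+1)/a i)^m` for all
`i < z`.  Then the minimum over all `1 ≤ t ≤ m` and all non-decreasing integer sequences
`l : Fin (m-t) → ℕ` with values `≤ z-1` (i.e. `< z`) of
`((1 + (t·a z + ∑ i, a (l i))/(d-m)) · ∏ i, a (l i)/a (l i + 1))^{1/t}`
equals `(1 + m·a z/(d-m))^{1/m}`; in particular every such term is at least this value,
and it is attained at `t = m` (the empty sequence). -/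
theorem technical_minimum_lemma (d m z : ℕ) (hd : 2 ≤ d) (hm1 : 1 ≤ m) (hm2 : m ≤ d - 1)
    (a : ℕ → ℝ) (ha0 : a 0 = 1)
    (hinc : ∀ i, i < z → a i < a (i + 1))
    (hcond : ∀ i, i < z →
      1 + (m : ℝ) * a i / ((d : ℝ) - m) ≥ (a (i + 1) / a i) ^ m) :
    IsLeast
      { x : ℝ | ∃ t : ℕ, 1 ≤ t ∧ t ≤ m ∧
          ∃ l : Fin (m - t) → ℕ, Monotone l ∧ (∀ i, l i < z) ∧
            x = ((1 + ((t : ℝ) * a z + ∑ i, a (l i)) / ((d : ℝ) - m)) *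
                  ∏ i, a (l i) / a (l i + 1)) ^ (1 / (t : ℝ)) }
      ((1 + (m : ℝ) * a z / ((d : ℝ) - m)) ^ (1 / (m : ℝ))) := by
  have hm0 : (m : ℝ) ≠ 0 := Nat.cast_ne_zero.mpr (by omega)
  have hmpos : (0 : ℝ) < m := by positivity
  set c : ℝ := (d : ℝ) - m with hcdef
  have hc1 : (1 : ℝ) ≤ c := by
    have h : m + 1 ≤ d := by omega
    have h' : ((m : ℝ) + 1) ≤ d := by exact_mod_cast h
    simp only [hcdef]; linarith
  have hcpos : (0 : ℝ) < c := lt_of_lt_of_le one_pos hc1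
  -- all values up to z are ≥ 1
  have ha1 : ∀ i, i ≤ z → 1 ≤ a i := by
    intro i
    induction i with
    | zero => intro _; simp [ha0]
    | succ n ih =>
      intro h
      have h1 := hinc n (by omega)
      have h2 := ih (by omega)
      linarith
  have hT1 : (1 : ℝ) ≤ 1 + (m : ℝ) * a z / c := by
    have := ha1 z le_rfl
    have : (0 : ℝ) ≤ (m : ℝ) * a z / c := by positivity
    linarith
  have hT0 : (0 : ℝ) ≤ 1 + (m : ℝ) * a z / c := by linarith
  constructor
  · -- membership: t = m, empty sequence
    refine ⟨m, hm1, le_rfl, fun _ => 0, monotone_const, ?_, ?_⟩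
    · intro i; exact absurd i.2 (by omega)
    · haveI : IsEmpty (Fin (m - m)) := by rw [Nat.sub_self]; infer_instance
      rw [Finset.univ_eq_empty, Finset.sum_empty, Finset.prod_empty]
      norm_num
  · -- lower bound
    rintro x ⟨t, ht1, htm, l, hmono, hlz, rfl⟩
    have ht0 : (t : ℝ) ≠ 0 := Nat.cast_ne_zero.mpr (by omega)
    have htpos : (0 : ℝ) < t := by positivity
    set T : ℝ := 1 + (m : ℝ) * a z / c with hTdef
    set K : Fin (m - t) → ℝ := fun i => 1 + (m : ℝ) * a (l i) / c with hKdef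
    have hK1 : ∀ i, (1 : ℝ) ≤ K i := by
      intro i
      have h1 := ha1 (l i) (le_of_lt (hlz i))
      have : (0 : ℝ) ≤ (m : ℝ) * a (l i) / c := by positivity
      simp only [hKdef]; linarith
    have hKpos : ∀ i, (0 : ℝ) < K i := fun i => lt_of_lt_of_le one_pos (hK1 i)
    have hapos : ∀ i, i ≤ z → (0 : ℝ) < a i := fun i hi =>
      lt_of_lt_of_le one_pos (ha1 i hi)
    -- each factor is at least (K i)^(-1/m)
    have hfac : ∀ i, ((K i) ^ ((m : ℝ)⁻¹))⁻¹ ≤ a (l i) / a (l i + 1) := by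
      intro i
      have hli : l i < z := hlz i
      have h0 : (0 : ℝ) < a (l i) := hapos _ (le_of_lt hli)
      have h1 : (0 : ℝ) < a (l i + 1) := hapos _ hli
      have hr0 : (0 : ℝ) < a (l i + 1) / a (l i) := by positivity
      have hcnd : (a (l i + 1) / a (l i)) ^ m ≤ K i := hcond (l i) hli
      have hle : a (l i + 1) / a (l i) ≤ (K i) ^ ((m : ℝ)⁻¹) := by
        have := Real.rpow_le_rpow (by positivity) hcnd (by positivity : (0:ℝ) ≤ (m:ℝ)⁻¹)
        rwa [Real.pow_rpow_inv_natCast (le_of_lt hr0) (by omega)] at this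
      have := inv_anti₀ hr0 hle
      rwa [inv_div] at this
    set Q : ℝ := ∏ i, (K i) ^ ((m : ℝ)⁻¹) with hQdef
    have hQpos : (0 : ℝ) < Q :=
      Finset.prod_pos fun i _ => Real.rpow_pos_of_pos (hKpos i) _
    -- product bound
    have hprod : Q⁻¹ ≤ ∏ i, a (l i) / a (l i + 1) := by
      rw [hQdef, ← Finset.prod_inv_distrib]
      exact Finset.prod_le_prod
        (fun i _ => inv_nonneg.mpr (Real.rpow_nonneg (hKpos i).le _)) (fun i _ => hfac i)
    -- AM-GM bound
    set B : ℝ := 1 + ((t : ℝ) * a z + ∑ i, a (l i)) / c with hBdef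
    have hamgm : T ^ ((t : ℝ) * (m : ℝ)⁻¹) * Q ≤ B := by
      have key := Real.geom_mean_le_arith_mean_weighted
        (Finset.univ : Finset (Fin (m - t) ⊕ Fin t))
        (fun _ => (m : ℝ)⁻¹) (Sum.elim K (fun _ => T))
        (fun i _ => by positivity)
        (by
          rw [Finset.sum_const, Finset.card_univ, Fintype.card_sum,
            Fintype.card_fin, Fintype.card_fin, nsmul_eq_mul]
          rw [show m - t + t = m by omega]
          field_simp)
        (fun i _ => by
          rcases i with i | i
          · exact le_of_lt (hKpos i)
          · exact le_trans zero_le_one hT1)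
      rw [Fintype.prod_sum_type, Fintype.sum_sum_type] at key
      simp only [Sum.elim_inl, Sum.elim_inr] at key
      have hL : (∏ i : Fin t, T ^ ((m : ℝ)⁻¹)) = T ^ ((t : ℝ) * (m : ℝ)⁻¹) := by
        rw [Finset.prod_const, Finset.card_univ, Fintype.card_fin,
          ← Real.rpow_natCast (T ^ ((m : ℝ)⁻¹)) t, ← Real.rpow_mul hT0, mul_comm]
      rw [hL] at key
      rw [mul_comm]
      refine le_trans key (le_of_eq ?_)
      have hsum : (∑ i : Fin (m - t), (m : ℝ)⁻¹ * K i)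
          = ((m - t : ℕ) : ℝ) * (m : ℝ)⁻¹ + (m : ℝ)⁻¹ * (m : ℝ) / c * (∑ i, a (l i)) := by
        simp only [hKdef]
        rw [Finset.mul_sum]
        rw [Finset.sum_congr rfl (fun i _ => by ring :
          ∀ i ∈ (Finset.univ : Finset (Fin (m - t))),
            (m : ℝ)⁻¹ * (1 + (m : ℝ) * a (l i) / c)
              = (m : ℝ)⁻¹ + (m : ℝ)⁻¹ * (m : ℝ) / c * a (l i))]
        rw [Finset.sum_add_distrib, Finset.sum_const, Finset.card_univ,
          Fintype.card_fin, nsmul_eq_mul, ← Finset.mul_sum]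
      rw [hsum, Finset.sum_const, Finset.card_univ, Fintype.card_fin, nsmul_eq_mul]
      have hmt : ((m - t : ℕ) : ℝ) = (m : ℝ) - (t : ℝ) := by
        push_cast [Nat.cast_sub htm]; ring
      rw [hmt, hBdef, hTdef]
      field_simp
      ring
    -- combine
    have hBpos : (0 : ℝ) ≤ B := le_trans (by positivity) hamgm
    have hmain : T ^ ((t : ℝ) * (m : ℝ)⁻¹) ≤ B * ∏ i, a (l i) / a (l i + 1) := by
      have h := mul_le_mul hamgm hprod (by positivity) hBpos
      rwa [mul_assoc, mul_inv_cancel₀ (ne_of_gt hQpos), mul_one] at h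
    have hfinal := Real.rpow_le_rpow (by positivity) hmain
      (by positivity : (0 : ℝ) ≤ 1 / (t : ℝ))
    rwa [← Real.rpow_mul hT0, show ((t : ℝ) * (m : ℝ)⁻¹) * (1 / (t : ℝ)) = 1 / (m : ℝ) by
      field_simp] at hfinal
end

section
/- For every integer d ≥ 2, the function f* defined by f*(0) = 1 and f*(l) = f*(l−1) · min_{1 ≤ m ≤ d−1} (1 + m·f*(l−1)/(d−m))^{1/m} for l ≥ 1 is a candidate function, i.e., f* is non-decreasing, f*(0) = 1, and for all integers 0 ≤ m ≤ d−1 and all integers 0 ≤ l_1 ≤ l_2 ≤ … ≤ l_m it holds that 1 + (∑_{i=1}^m f*(l_i))/(d−m) ≥ ∏_{i=1}^m f*(l_i+1)/f*(l_i). -/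
/-- The function `f*`: `f* 0 = 1` and
`f* l = f* (l-1) · min_{1 ≤ m ≤ d-1} (1 + m·f*(l-1)/(d-m))^{1/m}`. -/
noncomputable def fstar (d : ℕ) : ℕ → ℝ
  | 0 => 1
  | l + 1 =>
      fstar d l *
        sInf ((fun m : ℕ => (1 + (m : ℝ) * fstar d l / ((d : ℝ) - m)) ^ (1 / (m : ℝ))) ''
          Set.Icc 1 (d - 1))

lemma cast_sub_pos (d m : ℕ) (hd : 2 ≤ d) (hm : m ∈ Set.Icc 1 (d - 1)) :
    (0 : ℝ) < (d : ℝ) - m := by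
  obtain ⟨hm1, hm2⟩ := hm
  have : m + 1 ≤ d := by omega
  have : (m : ℝ) + 1 ≤ d := by exact_mod_cast this
  linarith

lemma mem_ge_one (d : ℕ) (hd : 2 ≤ d) (x : ℝ) (hx : 0 ≤ x) (m : ℕ)
    (hm : m ∈ Set.Icc 1 (d - 1)) :
    1 ≤ (1 + (m : ℝ) * x / ((d : ℝ) - m)) ^ (1 / (m : ℝ)) := by
  have hdm := cast_sub_pos d m hd hm
  have hb : (1 : ℝ) ≤ 1 + (m : ℝ) * x / ((d : ℝ) - m) := by
    have : 0 ≤ (m : ℝ) * x / ((d : ℝ) - m) :=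
      div_nonneg (mul_nonneg (Nat.cast_nonneg m) hx) hdm.le
    linarith
  exact Real.one_le_rpow hb (by positivity)

lemma sInf_ge_one (d : ℕ) (hd : 2 ≤ d) (x : ℝ) (hx : 0 ≤ x) :
    1 ≤ sInf ((fun m : ℕ => (1 + (m : ℝ) * x / ((d : ℝ) - m)) ^ (1 / (m : ℝ))) ''
      Set.Icc 1 (d - 1)) := by
  apply le_csInf
  · exact (Set.nonempty_Icc.2 (by omega)).image _
  · rintro y ⟨m, hm, rfl⟩
    exact mem_ge_one d hd x hx m hm

lemma fstar_ge_one (d : ℕ) (hd : 2 ≤ d) : ∀ l, 1 ≤ fstar d l := by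
  intro l
  induction l with
  | zero => simp [fstar]
  | succ n ih =>
    rw [fstar]
    have h1 := sInf_ge_one d hd (fstar d n) (by linarith)
    nlinarith

lemma fstar_succ_le (d : ℕ) (hd : 2 ≤ d) (l : ℕ) (m : ℕ) (hm : m ∈ Set.Icc 1 (d - 1)) :
    fstar d (l + 1) ≤ fstar d l * (1 + (m : ℝ) * fstar d l / ((d : ℝ) - m)) ^ (1 / (m : ℝ)) := by
  rw [fstar]
  have h0 : (0 : ℝ) ≤ fstar d l := by linarith [fstar_ge_one d hd l]
  apply mul_le_mul_of_nonneg_left _ h0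
  apply csInf_le
  · exact ((Set.finite_Icc 1 (d - 1)).image _).bddBelow
  · exact ⟨m, hm, rfl⟩

lemma fstar_ratio_le (d : ℕ) (hd : 2 ≤ d) (l : ℕ) (m : ℕ) (hm : m ∈ Set.Icc 1 (d - 1)) :
    fstar d (l + 1) / fstar d l ≤ (1 + (m : ℝ) * fstar d l / ((d : ℝ) - m)) ^ (1 / (m : ℝ)) := by
  have h0 : (0 : ℝ) < fstar d l := by linarith [fstar_ge_one d hd l]
  rw [div_le_iff₀ h0, mul_comm]
  exact fstar_succ_le d hd l m hm

/-- For every `d ≥ 2`, the function `f*` is a candidate function in `C_d`. -/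
theorem fstar_is_candidate (d : ℕ) (hd : 2 ≤ d) : CandidateFn d (fstar d) := by
  have hge1 := fstar_ge_one d hd
  have hpos : ∀ l, (0 : ℝ) < fstar d l := fun l => by linarith [hge1 l]
  refine ⟨?_, rfl, ?_⟩
  · apply monotone_nat_of_le_succ
    intro n
    rw [fstar]
    nlinarith [sInf_ge_one d hd (fstar d n) (hpos n).le, hge1 n]
  · intro m hm l _
    rcases Nat.eq_zero_or_pos m with rfl | hm1
    · simp
    have hmIcc : m ∈ Set.Icc 1 (d - 1) := ⟨hm1, by omega⟩
    have hdm : (0 : ℝ) < (d : ℝ) - m := cast_sub_pos d m hd hmIcc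
    have hmR : (0 : ℝ) < m := by exact_mod_cast hm1
    -- step 1: bound each ratio
    have step1 : ∏ i, fstar d (l i + 1) / fstar d (l i) ≤
        ∏ i : Fin m, (1 + (m : ℝ) * fstar d (l i) / ((d : ℝ) - m)) ^ (1 / (m : ℝ)) := by
      apply Finset.prod_le_prod
      · intro i _
        exact div_nonneg (hpos _).le (hpos _).le
      · intro i _
        exact fstar_ratio_le d hd (l i) m hmIcc
    -- step 2: AM-GM
    have step2 : ∏ i : Fin m, (1 + (m : ℝ) * fstar d (l i) / ((d : ℝ) - m)) ^ (1 / (m : ℝ)) ≤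
        ∑ i : Fin m, (1 / (m : ℝ)) * (1 + (m : ℝ) * fstar d (l i) / ((d : ℝ) - m)) := by
      apply Real.geom_mean_le_arith_mean_weighted
      · intro i _; exact one_div_nonneg.2 hmR.le
      · rw [Finset.sum_const, Finset.card_univ, Fintype.card_fin, nsmul_eq_mul]
        field_simp
      · intro i _
        have : 0 ≤ (m : ℝ) * fstar d (l i) / ((d : ℝ) - m) :=
          div_nonneg (mul_nonneg (Nat.cast_nonneg m) (hpos _).le) hdm.le
        linarith
    -- step 3: compute the sum
    have step3 : ∑ i : Fin m, (1 / (m : ℝ)) * (1 + (m : ℝ) * fstar d (l i) / ((d : ℝ) - m)) =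
        1 + (∑ i, fstar d (l i)) / ((d : ℝ) - m) := by
      have : ∀ i : Fin m, (1 / (m : ℝ)) * (1 + (m : ℝ) * fstar d (l i) / ((d : ℝ) - m)) =
          1 / (m : ℝ) + fstar d (l i) / ((d : ℝ) - m) := by
        intro i; field_simp
      rw [Finset.sum_congr rfl (fun i _ => this i), Finset.sum_add_distrib,
        Finset.sum_const, Finset.card_univ, Fintype.card_fin, ← Finset.sum_div, nsmul_eq_mul]
      field_simp
    calc ∏ i, fstar d (l i + 1) / fstar d (l i) ≤ _ := step1
      _ ≤ _ := step2
      _ = _ := step3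
end

section
/- For every integer d ≥ 2, the function f* is the optimal candidate function in C_d: for every candidate function h ∈ C_d and every integer l ≥ 0, f*(l) ≥ h(l). -/
/-- For every `d ≥ 2`, `f*` is the optimal candidate function in `C_d`: it pointwise
dominates every candidate function. -/
theorem fstar_is_optimal_candidate (d : ℕ) (hd : 2 ≤ d)
    (h : ℕ → ℝ) (hh : CandidateFn d h) :
    ∀ l : ℕ, fstar d l ≥ h l := by
  obtain ⟨hmono, h0, hcand⟩ := hh
  have hone : ∀ k, (1 : ℝ) ≤ h k := fun k => h0 ▸ hmono (Nat.zero_le k)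
  intro l
  induction l with
  | zero => simp [fstar, h0]
  | succ l ih =>
    have hx : h l ≤ fstar d l := ih
    have hx1 : (1 : ℝ) ≤ fstar d l := le_trans (hone l) hx
    set S : Set ℝ :=
      (fun m : ℕ => (1 + (m : ℝ) * fstar d l / ((d : ℝ) - m)) ^ (1 / (m : ℝ))) ''
        Set.Icc 1 (d - 1) with hS
    have hfin : S.Finite := (Set.finite_Icc _ _).image _
    have hne : S.Nonempty := ⟨_, ⟨1, ⟨le_refl 1, by omega⟩, rfl⟩⟩
    obtain ⟨m, hm, hmy⟩ := hne.csInf_mem hfin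
    obtain ⟨hm1, hm2⟩ := hm
    have hmd : m < d := by omega
    have hdm : (1 : ℝ) ≤ (d : ℝ) - m := by
      have : (m : ℝ) + 1 ≤ d := by exact_mod_cast Nat.succ_le_of_lt hmd
      linarith
    have hdm0 : (0 : ℝ) < (d : ℝ) - m := by linarith
    have hm0 : (m : ℝ) ≠ 0 := Nat.cast_ne_zero.mpr (by omega)
    have hmR0 : (0 : ℝ) ≤ (m : ℝ) := Nat.cast_nonneg m
    -- candidate inequality with constant tuple
    have hc := hcand m hmd (fun _ => l) monotone_const
    simp only [Finset.sum_const, Finset.prod_const, Finset.card_univ, Fintype.card_fin,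
      nsmul_eq_mul] at hc
    -- hc : 1 + m * h l / (d - m) ≥ (h (l+1) / h l) ^ m
    have hhl0 : (0 : ℝ) < h l := lt_of_lt_of_le one_pos (hone l)
    have ha0 : (0 : ℝ) ≤ h (l + 1) / h l := div_nonneg (by linarith [hone (l+1)]) hhl0.le
    have key : h (l + 1) / h l ≤ (1 + (m : ℝ) * h l / ((d : ℝ) - m)) ^ (1 / (m : ℝ)) := by
      have h1 : h (l + 1) / h l = ((h (l + 1) / h l) ^ m) ^ (1 / (m : ℝ)) := by
        rw [← Real.rpow_natCast (h (l + 1) / h l) m, ← Real.rpow_mul ha0]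
        rw [mul_one_div, div_self hm0, Real.rpow_one]
      rw [h1]
      exact Real.rpow_le_rpow (pow_nonneg ha0 m) hc (by positivity)
    have hB : (1 + (m : ℝ) * h l / ((d : ℝ) - m)) ^ (1 / (m : ℝ)) ≤
        (1 + (m : ℝ) * fstar d l / ((d : ℝ) - m)) ^ (1 / (m : ℝ)) := by
      apply Real.rpow_le_rpow
      · positivity
      · have h3 : (m : ℝ) * h l / ((d:ℝ) - m) ≤ (m : ℝ) * fstar d l / ((d:ℝ) - m) := by
          gcongr
        linarith
      · positivity
    have hstep : h (l + 1) ≤ h l * (1 + (m : ℝ) * h l / ((d : ℝ) - m)) ^ (1 / (m : ℝ)) := by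
      rw [div_le_iff₀ hhl0] at key
      linarith [key]
    have hfinal : h l * (1 + (m : ℝ) * h l / ((d : ℝ) - m)) ^ (1 / (m : ℝ)) ≤
        fstar d l * (1 + (m : ℝ) * fstar d l / ((d : ℝ) - m)) ^ (1 / (m : ℝ)) := by
      apply mul_le_mul hx hB (by positivity) (by linarith)
    show fstar d l * sInf S ≥ h (l + 1)
    rw [← hmy]
    exact le_trans hstep hfinal
end

section
/- For every integer d ≥ 2, the function f(l) = (d/(d−1))^l is a candidate function in C_d; that is, it is non-decreasing with f(0) = 1 and satisfies, for all integers 0 ≤ m ≤ d−1 and all integers 0 ≤ l_1 ≤ … ≤ l_m, the inequality 1 + (∑_{i=1}^m (d/(d−1))^{l_i})/(d−m) ≥ (d/(d−1))^m. -/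
lemma geom_aux (d : ℕ) (hd : 2 ≤ d) : ∀ m : ℕ, m < d →
    ((d : ℝ) / ((d : ℝ) - 1)) ^ m ≤ (d : ℝ) / ((d : ℝ) - m) := by
  have hd1 : (1 : ℝ) ≤ (d : ℝ) - 1 := by
    have : (2 : ℝ) ≤ (d : ℝ) := by exact_mod_cast hd
    linarith
  intro m
  induction m with
  | zero =>
    intro _
    have hne : (d : ℝ) ≠ 0 := by positivity
    simp [div_self hne]
  | succ m ih =>
    intro hm
    have hm' : m < d := Nat.lt_of_succ_lt hm
    have ihm := ih hm'
    have hdm : (0 : ℝ) < (d : ℝ) - m := by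
      have : (m : ℝ) < (d : ℝ) := by exact_mod_cast hm'
      linarith
    have hdm1 : (0 : ℝ) < (d : ℝ) - (m + 1 : ℕ) := by
      have : ((m : ℝ) + 1) < (d : ℝ) := by exact_mod_cast hm
      push_cast; linarith
    have hd0 : (0 : ℝ) < (d : ℝ) := by positivity
    have hrpos : (0 : ℝ) ≤ (d : ℝ) / ((d : ℝ) - 1) := by positivity
    calc ((d : ℝ) / ((d : ℝ) - 1)) ^ (m + 1)
        = ((d : ℝ) / ((d : ℝ) - 1)) ^ m * ((d : ℝ) / ((d : ℝ) - 1)) := by ring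
      _ ≤ ((d : ℝ) / ((d : ℝ) - m)) * ((d : ℝ) / ((d : ℝ) - 1)) := by
          apply mul_le_mul_of_nonneg_right ihm hrpos
      _ ≤ (d : ℝ) / ((d : ℝ) - (m + 1 : ℕ)) := by
          rw [div_mul_div_comm, div_le_div_iff₀ (by positivity) hdm1]
          push_cast
          have hm0 : (0 : ℝ) ≤ (m : ℝ) := Nat.cast_nonneg m
          nlinarith

/-- For every `d ≥ 2`, the function `f l = (d/(d-1))^l` is a candidate function in `C_d`:
it is non-decreasing with `f 0 = 1`, and (since for this `f` the product
`∏ i, f (l i + 1)/f (l i)` equals `(d/(d-1))^m`) it satisfies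
`1 + (∑ i, (d/(d-1))^{l i})/(d-m) ≥ (d/(d-1))^m` for all `0 ≤ m ≤ d-1` and all
non-decreasing integer sequences `l₁ ≤ … ≤ l_m`. -/
theorem geometric_is_candidate (d : ℕ) (hd : 2 ≤ d) :
    CandidateFn d (fun l => ((d : ℝ) / ((d : ℝ) - 1)) ^ l) ∧
      ∀ m : ℕ, m < d → ∀ l : Fin m → ℕ, Monotone l →
        1 + (∑ i, ((d : ℝ) / ((d : ℝ) - 1)) ^ (l i)) / ((d : ℝ) - m) ≥
          ((d : ℝ) / ((d : ℝ) - 1)) ^ m := by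
  have hd2 : (2 : ℝ) ≤ (d : ℝ) := by exact_mod_cast hd
  have hd1 : (1 : ℝ) ≤ (d : ℝ) - 1 := by linarith
  set r : ℝ := (d : ℝ) / ((d : ℝ) - 1) with hr_def
  have hr1 : (1 : ℝ) ≤ r := by
    rw [hr_def, le_div_iff₀ (by linarith)]; linarith
  have hr0 : (0 : ℝ) < r := by linarith
  -- the main inequality
  have key : ∀ m : ℕ, m < d → ∀ l : Fin m → ℕ, Monotone l →
      1 + (∑ i, r ^ (l i)) / ((d : ℝ) - m) ≥ r ^ m := by
    intro m hm l _
    have hdm : (0 : ℝ) < (d : ℝ) - m := by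
      have : (m : ℝ) < (d : ℝ) := by exact_mod_cast hm
      linarith
    have hsum : (m : ℝ) ≤ ∑ i, r ^ (l i) := by
      calc (m : ℝ) = ∑ _i : Fin m, (1 : ℝ) := by simp
        _ ≤ ∑ i, r ^ (l i) := by
            apply Finset.sum_le_sum
            intro i _
            exact one_le_pow₀ hr1
    have h1 : 1 + (m : ℝ) / ((d : ℝ) - m) ≤ 1 + (∑ i, r ^ (l i)) / ((d : ℝ) - m) := by
      gcongr
    have h2 : 1 + (m : ℝ) / ((d : ℝ) - m) = (d : ℝ) / ((d : ℝ) - m) := by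
      field_simp
      ring
    have h3 := geom_aux d hd m hm
    rw [← hr_def] at h3
    linarith
  refine ⟨⟨?_, by simp, ?_⟩, key⟩
  · intro a b hab
    exact pow_le_pow_right₀ (by linarith) hab
  · intro m hm l hl
    have hprod : (∏ i, r ^ (l i + 1) / r ^ (l i)) = r ^ m := by
      have heq : ∀ i : Fin m, r ^ (l i + 1) / r ^ (l i) = r := by
        intro i
        rw [pow_succ]
        field_simp
      rw [Finset.prod_congr rfl (fun i _ => heq i)]
      simp
    simpa [hprod] using key m hm l hl
end

section
/- For every integer d ≥ 2, the optimal candidate function f* in C_d has non-decreasing consecutive ratios: f*(l+1)/f*(l) ≥ f*(l)/f*(l−1) for every integer l ≥ 1. Consequently, for all integers k ≥ d, f*(k) ≥ f*(d)^{k/d}. -/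
namespace FstarAux

noncomputable def gval (d : ℕ) (x : ℝ) : ℝ :=
  sInf ((fun m : ℕ => (1 + (m : ℝ) * x / ((d : ℝ) - m)) ^ (1 / (m : ℝ))) '' Set.Icc 1 (d - 1))

lemma fstar_succ (d l : ℕ) : fstar d (l + 1) = fstar d l * gval d (fstar d l) := rfl

variable {d : ℕ}

lemma denom_pos (hd : 2 ≤ d) {m : ℕ} (hm : m ∈ Set.Icc 1 (d - 1)) : (0:ℝ) < (d:ℝ) - m := by
  have h1 : m ≤ d - 1 := hm.2
  have hlt : m < d := by omega
  have : (m:ℝ) < d := by exact_mod_cast hlt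
  linarith

lemma one_le_term (hd : 2 ≤ d) {x : ℝ} (hx : 0 ≤ x) {m : ℕ} (hm : m ∈ Set.Icc 1 (d - 1)) :
    1 ≤ (1 + (m : ℝ) * x / ((d : ℝ) - m)) ^ (1 / (m : ℝ)) := by
  have hden := denom_pos hd hm
  have hbase : 1 ≤ 1 + (m:ℝ) * x / ((d:ℝ) - m) := by
    have : 0 ≤ (m:ℝ) * x / ((d:ℝ) - m) := div_nonneg (by positivity) hden.le
    linarith
  exact Real.one_le_rpow hbase (by positivity)

lemma term_mono (hd : 2 ≤ d) {x y : ℝ} (hx : 0 ≤ x) (hxy : x ≤ y) {m : ℕ} (hm : m ∈ Set.Icc 1 (d - 1)) :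
    (1 + (m : ℝ) * x / ((d : ℝ) - m)) ^ (1 / (m : ℝ)) ≤
      (1 + (m : ℝ) * y / ((d : ℝ) - m)) ^ (1 / (m : ℝ)) := by
  have hden := denom_pos hd hm
  have hbase : 1 + (m:ℝ) * x / ((d:ℝ) - m) ≤ 1 + (m:ℝ) * y / ((d:ℝ) - m) := by
    have h1 : (m:ℝ) * x ≤ (m:ℝ) * y :=
      mul_le_mul_of_nonneg_left hxy (Nat.cast_nonneg m)
    have h2 : (m:ℝ) * x / ((d:ℝ) - m) ≤ (m:ℝ) * y / ((d:ℝ) - m) :=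
      (div_le_div_iff_of_pos_right hden).mpr h1
    linarith
  have h0 : 0 ≤ 1 + (m:ℝ) * x / ((d:ℝ) - m) := by
    have : 0 ≤ (m:ℝ) * x / ((d:ℝ) - m) := div_nonneg (by positivity) hden.le
    linarith
  exact Real.rpow_le_rpow h0 hbase (by positivity)

lemma gset_nonempty (hd : 2 ≤ d) (x : ℝ) :
    ((fun m : ℕ => (1 + (m : ℝ) * x / ((d : ℝ) - m)) ^ (1 / (m : ℝ))) ''
      Set.Icc 1 (d - 1)).Nonempty := by
  refine ⟨_, ⟨1, ⟨le_refl 1, by omega⟩, rfl⟩⟩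

lemma gset_bddBelow (hd : 2 ≤ d) {x : ℝ} (hx : 0 ≤ x) :
    BddBelow ((fun m : ℕ => (1 + (m : ℝ) * x / ((d : ℝ) - m)) ^ (1 / (m : ℝ))) ''
      Set.Icc 1 (d - 1)) := by
  refine ⟨1, ?_⟩
  rintro b ⟨m, hm, rfl⟩
  exact one_le_term hd hx hm

lemma one_le_gval (hd : 2 ≤ d) {x : ℝ} (hx : 0 ≤ x) : 1 ≤ gval d x := by
  refine le_csInf (gset_nonempty hd x) ?_
  rintro b ⟨m, hm, rfl⟩
  exact one_le_term hd hx hm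

lemma gval_mono (hd : 2 ≤ d) {x y : ℝ} (hx : 0 ≤ x) (hxy : x ≤ y) : gval d x ≤ gval d y := by
  refine le_csInf (gset_nonempty hd y) ?_
  rintro b ⟨m, hm, rfl⟩
  calc gval d x ≤ (1 + (m : ℝ) * x / ((d : ℝ) - m)) ^ (1 / (m : ℝ)) :=
        csInf_le (gset_bddBelow hd hx) ⟨m, hm, rfl⟩
    _ ≤ _ := term_mono hd hx hxy hm

lemma one_le_fstar (hd : 2 ≤ d) : ∀ l, 1 ≤ fstar d l := by
  intro l
  induction l with
  | zero => simp [fstar]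
  | succ n ih =>
    rw [fstar_succ]
    have hg := one_le_gval hd (le_trans zero_le_one ih)
    nlinarith

lemma fstar_pos (hd : 2 ≤ d) (l : ℕ) : 0 < fstar d l := lt_of_lt_of_le one_pos (one_le_fstar hd l)

lemma fstar_le_succ (hd : 2 ≤ d) (l : ℕ) : fstar d l ≤ fstar d (l + 1) := by
  rw [fstar_succ]
  have h1 := one_le_fstar hd l
  have hg := one_le_gval hd (le_trans zero_le_one h1)
  nlinarith

lemma fstar_monotone (hd : 2 ≤ d) : Monotone (fstar d) :=
  monotone_nat_of_le_succ (fstar_le_succ hd)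

lemma gval_fstar_mono (hd : 2 ≤ d) {l l' : ℕ} (h : l ≤ l') : gval d (fstar d l) ≤ gval d (fstar d l') :=
  gval_mono hd (fstar_pos hd l).le (fstar_monotone hd h)

end FstarAux

open FstarAux in
/-- For every `d ≥ 2`, the consecutive ratios of `f*` are non-decreasing:
`f*(l+1)/f*(l) ≥ f*(l)/f*(l-1)` for every `l ≥ 1`; consequently for all `k ≥ d`,
`f*(k) ≥ f*(d)^{k/d}`. -/
theorem fstar_ratios_nondecreasing_and_power_bound (d : ℕ) (hd : 2 ≤ d) :
    (∀ l : ℕ, 1 ≤ l → fstar d l / fstar d (l - 1) ≤ fstar d (l + 1) / fstar d l) ∧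
      ∀ k : ℕ, d ≤ k → fstar d d ^ ((k : ℝ) / (d : ℝ)) ≤ fstar d k := by
  have hfpos := fstar_pos hd
  constructor
  · rintro l hl
    obtain ⟨n, rfl⟩ : ∃ n, l = n + 1 := ⟨l - 1, by omega⟩
    simp only [Nat.add_sub_cancel]
    have h1 : fstar d (n + 1) / fstar d n = gval d (fstar d n) := by
      rw [fstar_succ, mul_div_cancel_left₀ _ (hfpos n).ne']
    have h2 : fstar d (n + 1 + 1) / fstar d (n + 1) = gval d (fstar d (n + 1)) := by
      rw [fstar_succ d (n + 1), mul_div_cancel_left₀ _ (hfpos (n + 1)).ne']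
    rw [h1, h2]
    exact gval_fstar_mono hd (Nat.le_succ n)
  · -- power bound
    set R := gval d (fstar d (d - 1)) with hR
    have hR1 : 1 ≤ R := one_le_gval hd (hfpos (d - 1)).le
    -- Claim A : fstar d n ≤ R ^ n for n ≤ d
    have claimA : ∀ n, n ≤ d → fstar d n ≤ R ^ n := by
      intro n
      induction n with
      | zero => intro _; simp [fstar]
      | succ m ih =>
        intro hm
        rw [fstar_succ, pow_succ]
        have h1 : fstar d m ≤ R ^ m := ih (by omega)
        have h2 : gval d (fstar d m) ≤ R := gval_fstar_mono hd (by omega)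
        have hg : 0 ≤ gval d (fstar d m) :=
          le_trans zero_le_one (one_le_gval hd (hfpos m).le)
        exact mul_le_mul h1 h2 hg (le_trans (hfpos m).le h1)
    -- Claim B : fstar d d * R ^ j ≤ fstar d (d + j)
    have claimB : ∀ j, fstar d d * R ^ j ≤ fstar d (d + j) := by
      intro j
      induction j with
      | zero => simp
      | succ m ih =>
        have h2 : R ≤ gval d (fstar d (d + m)) := gval_fstar_mono hd (by omega)
        have hnn : 0 ≤ fstar d d * R ^ m :=
          mul_nonneg (hfpos d).le (pow_nonneg (by linarith) m)
        calc fstar d d * R ^ (m + 1) = (fstar d d * R ^ m) * R := by ring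
          _ ≤ fstar d (d + m) * gval d (fstar d (d + m)) :=
              mul_le_mul ih h2 (by linarith) (hfpos (d + m)).le
          _ = fstar d (d + m + 1) := (fstar_succ d (d + m)).symm
    intro k hk
    obtain ⟨j, rfl⟩ : ∃ j, k = d + j := ⟨k - d, by omega⟩
    have hdpos : (0:ℝ) < d := by exact_mod_cast (by omega : 0 < d)
    have hfd1 : (1:ℝ) ≤ fstar d d := one_le_fstar hd d
    -- fstar d d ^ (1/d) ≤ R
    have hroot : fstar d d ^ ((1:ℝ) / d) ≤ R := by
      have h1 : fstar d d ≤ R ^ (d:ℝ) := by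
        rw [Real.rpow_natCast]; exact claimA d le_rfl
      calc fstar d d ^ ((1:ℝ) / d) ≤ (R ^ (d:ℝ)) ^ ((1:ℝ) / d) :=
            Real.rpow_le_rpow (by positivity) h1 (by positivity)
        _ = R := by
            rw [← Real.rpow_mul (by linarith : (0:ℝ) ≤ R),
              mul_one_div, div_self hdpos.ne', Real.rpow_one]
    have hroot1 : (1:ℝ) ≤ fstar d d ^ ((1:ℝ) / d) :=
      Real.one_le_rpow hfd1 (by positivity)
    have hkey : fstar d d ^ (((d:ℝ) + j) / d) ≤ fstar d d * R ^ j := by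
      have hsplit : ((d:ℝ) + j) / d = 1 + ((1:ℝ)/d) * j := by
        field_simp
      rw [hsplit, Real.rpow_add (by linarith : (0:ℝ) < fstar d d), Real.rpow_one,
        Real.rpow_mul (by linarith : (0:ℝ) ≤ fstar d d), Real.rpow_natCast]
      have : (fstar d d ^ ((1:ℝ) / d)) ^ j ≤ R ^ j :=
        pow_le_pow_left₀ (by positivity) hroot j
      nlinarith [pow_nonneg (le_trans zero_le_one hroot1) j]
    calc fstar d d ^ (((d + j : ℕ):ℝ) / d) = fstar d d ^ (((d:ℝ) + j) / d) := by
          push_cast; ring_nf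
      _ ≤ fstar d d * R ^ j := hkey
      _ ≤ fstar d (d + j) := claimB j
end
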